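/- arXiv:1202.3963 — 10 statements merged into one kernel-verified Lean document; each statement's English description precedes it below -/
import Mathlib

section
/- Let H be a complex Hilbert space, n ≥ 2 an integer, and T a bounded linear operator on H with T^n = 0. Then the numerical radius of T satisfies w(T) ≤ ‖T‖ · cos(π/(n+1)). -/
/-!
For a contraction `S` let `D = (1 - S⋆S)^{1/2}` be its defect operator, so that
`⟪D u, D v⟫ = ⟪u, v⟫ - ⟪S u, S v⟫`. If `S ^ n = 0`, telescoping along `x, S x, …, S^n x = 0` gives
`⟪S x, x⟫ = ∑_{k<n} ⟪D S^{k+1} x, D S^k x⟫` and `∑_{k<n} d_k² = ‖x‖²` for `d_k = ‖D S^k x‖`.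
Cauchy–Schwarz bounds `|⟪S x, x⟫|` by `∑ d_k d_{k+1}`, and this form on the path graph is at
most `cos (π / (n+1)) ∑ d_k²`, as the positive eigenvector `k ↦ sin (k π / (n+1))` certifies.
-/

open Finset

lemma mul_le_div_mul_sq_add_div_mul_sq {p q : ℝ} (hp : 0 < p) (hq : 0 < q) (x y : ℝ) :
    x * y ≤ q / (2 * p) * x ^ 2 + p / (2 * q) * y ^ 2 := by
  rw [div_mul_eq_mul_div, div_mul_eq_mul_div, div_add_div _ _ (by positivity) (by positivity),
    le_div_iff₀ (by positivity)]
  nlinarith [sq_nonneg (q * x - p * y), mul_pos hp hq]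

/-- `s` is a positive eigenvector of the path graph for the eigenvalue `2 c`; AM-GM with the
weights `s (k+2) / s (k+1)` then bounds each product `a k * a (k+1)`. -/
lemma sum_mul_succ_le_of_recurrence {n : ℕ} {c : ℝ} {s a : ℕ → ℝ} (hs₀ : s 0 = 0)
    (hs_pos : ∀ k < n, 0 < s (k + 1)) (hs_last : 0 ≤ s (n + 1))
    (hs_rec : ∀ k < n, s (k + 2) + s k = 2 * c * s (k + 1)) (ha : a n = 0) :
    ∑ k ∈ range n, a k * a (k + 1) ≤ c * ∑ k ∈ range n, a k ^ 2 := by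
  set g : ℕ → ℝ := fun j => s j / (2 * s (j + 1)) * a j ^ 2
  have hterm : ∀ k ∈ range n,
      a k * a (k + 1) ≤ s (k + 2) / (2 * s (k + 1)) * a k ^ 2 + g (k + 1) := by
    intro k hk
    rw [mem_range] at hk
    rcases (Nat.succ_le_of_lt hk).lt_or_eq with hk' | rfl
    · exact mul_le_div_mul_sq_add_div_mul_sq (hs_pos k hk) (hs_pos (k + 1) hk') _ _
    · have hq : 0 ≤ s (k + 2) / (2 * s (k + 1)) :=
        div_nonneg hs_last (by linarith [hs_pos k k.lt_succ_self])
      simpa [g, ha] using mul_nonneg hq (sq_nonneg (a k))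
  have hshift : ∑ k ∈ range n, g (k + 1) = ∑ k ∈ range n, g k := by
    have h := sum_range_succ' g n
    rw [sum_range_succ] at h
    simpa [g, hs₀, ha] using h.symm
  calc ∑ k ∈ range n, a k * a (k + 1)
      ≤ ∑ k ∈ range n, (s (k + 2) / (2 * s (k + 1)) * a k ^ 2 + g k) := by
        rw [sum_add_distrib, ← hshift, ← sum_add_distrib]
        exact sum_le_sum hterm
    _ = c * ∑ k ∈ range n, a k ^ 2 := by
        rw [mul_sum]
        refine sum_congr rfl fun k hk => ?_
        have hk := mem_range.mp hk
        have := hs_pos k hk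
        rw [← add_mul, ← add_div, hs_rec k hk]
        field_simp

lemma sum_mul_succ_le_cos_mul_sum_sq {n : ℕ} {a : ℕ → ℝ} (ha : a n = 0) :
    ∑ k ∈ range n, a k * a (k + 1) ≤ Real.cos (Real.pi / (n + 1)) * ∑ k ∈ range n, a k ^ 2 := by
  set θ := Real.pi / (n + 1)
  have hθ : ((n : ℝ) + 1) * θ = Real.pi := by simp only [θ]; field_simp
  refine sum_mul_succ_le_of_recurrence (s := fun j => Real.sin (j * θ)) (by simp) ?_ ?_ ?_ ha
  · intro k hk
    have hk' : ((k : ℝ) + 1) < n + 1 := by exact_mod_cast Nat.succ_lt_succ hk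
    apply Real.sin_pos_of_pos_of_lt_pi
    · push_cast; positivity
    · push_cast
      rw [← hθ]
      exact mul_lt_mul_of_pos_right hk' (by positivity)
  · simp [hθ]
  · intro k _
    push_cast
    rw [show ((k : ℝ) + 2) * θ = ((k : ℝ) + 1) * θ + θ by ring,
      show (k : ℝ) * θ = ((k : ℝ) + 1) * θ - θ by ring, Real.sin_add, Real.sin_sub]
    ring

namespace CStarAlgebra

variable {A : Type*} [CStarAlgebra A] [PartialOrder A] [StarOrderedRing A]

lemma star_mul_self_le_one {a : A} (ha : ‖a‖ ≤ 1) : star a * a ≤ 1 := by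
  calc star a * a ≤ algebraMap ℝ A (‖a‖ ^ 2) := star_mul_le_algebraMap_norm_sq
    _ ≤ algebraMap ℝ A 1 := by
      gcongr
      exact pow_le_one₀ (norm_nonneg a) ha
    _ = 1 := map_one _

noncomputable def defect (a : A) : A := CFC.sqrt (1 - star a * a)

lemma star_defect_mul_defect {a : A} (ha : ‖a‖ ≤ 1) :
    star (defect a) * defect a = 1 - star a * a := by
  rw [defect, (CFC.sqrt_nonneg _).isSelfAdjoint.star_eq,
    CFC.sqrt_mul_sqrt_self _ (sub_nonneg.mpr (star_mul_self_le_one ha))]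

end CStarAlgebra

namespace ContinuousLinearMap

open CStarAlgebra

variable {H : Type*} [NormedAddCommGroup H] [InnerProductSpace ℂ H] [CompleteSpace H]

lemma inner_defect_apply_defect_apply {S : H →L[ℂ] H} (hS : ‖S‖ ≤ 1) (u v : H) :
    inner ℂ (defect S u) (defect S v) = inner ℂ u v - inner ℂ (S u) (S v) := by
  calc inner ℂ (defect S u) (defect S v)
      = inner ℂ ((star (defect S) * defect S) u) v := by
        rw [star_eq_adjoint, mul_apply_eq_comp, adjoint_inner_left]
    _ = inner ℂ u v - inner ℂ (S u) (S v) := by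
        rw [star_defect_mul_defect hS, sub_apply, one_apply_eq_self, mul_apply_eq_comp,
          inner_sub_left, star_eq_adjoint, adjoint_inner_left]

lemma norm_defect_apply_sq {S : H →L[ℂ] H} (hS : ‖S‖ ≤ 1) (u : H) :
    ‖defect S u‖ ^ 2 = ‖u‖ ^ 2 - ‖S u‖ ^ 2 := by
  have := inner_defect_apply_defect_apply hS u u
  simp only [inner_self_eq_norm_sq_to_K] at this
  exact_mod_cast this

lemma norm_inner_apply_self_le_of_norm_le_one {S : H →L[ℂ] H} (hS : ‖S‖ ≤ 1) {n : ℕ}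
    (hSn : S ^ n = 0) (x : H) :
    ‖inner ℂ (S x) x‖ ≤ Real.cos (Real.pi / (n + 1)) * ‖x‖ ^ 2 := by
  set y : ℕ → H := fun k => (S ^ k) x
  set d : ℕ → ℝ := fun k => ‖defect S (y k)‖
  have hy : ∀ k, y (k + 1) = S (y k) := fun k => by
    simp only [y, pow_succ', mul_apply_eq_comp]
  have hyn : y n = 0 := by simp only [y, hSn, zero_apply]
  have htel : inner ℂ (S x) x = ∑ k ∈ range n, inner ℂ (defect S (y (k + 1))) (defect S (y k)) := by
    simp only [inner_defect_apply_defect_apply hS, ← hy]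
    rw [sum_range_sub' (fun k => inner ℂ (y (k + 1)) (y k)), hyn, inner_zero_right, sub_zero]
    simp [y]
  have hd_sq : ∑ k ∈ range n, d k ^ 2 = ‖x‖ ^ 2 := by
    simp only [d, norm_defect_apply_sq hS, ← hy]
    rw [sum_range_sub' (fun k => ‖y k‖ ^ 2), hyn]
    simp [y]
  calc ‖inner ℂ (S x) x‖ ≤ ∑ k ∈ range n, d k * d (k + 1) := by
        rw [htel]
        refine (norm_sum_le _ _).trans (sum_le_sum fun k _ => ?_)
        rw [mul_comm]
        exact norm_inner_le_norm _ _
    _ ≤ Real.cos (Real.pi / (n + 1)) * ‖x‖ ^ 2 := by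
        rw [← hd_sq]
        exact sum_mul_succ_le_cos_mul_sum_sq (by simp [d, hyn])

lemma norm_inner_apply_self_le_of_pow_eq_zero {T : H →L[ℂ] H} {n : ℕ} (hT : T ^ n = 0)
    (x : H) : ‖inner ℂ (T x) x‖ ≤ ‖T‖ * Real.cos (Real.pi / (n + 1)) * ‖x‖ ^ 2 := by
  rcases eq_or_ne T 0 with rfl | hT₀
  · simp
  set S : H →L[ℂ] H := (‖T‖⁻¹ : ℂ) • T
  have hS : ‖S‖ = 1 := norm_smul_inv_norm hT₀
  have hTS : T = (‖T‖ : ℂ) • S := (smul_inv_smul₀ (by simpa using hT₀) T).symm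
  have hSn : S ^ n = 0 := by rw [smul_pow, hT, smul_zero]
  rw [hTS, smul_apply, inner_smul_left, norm_mul, RCLike.norm_conj, norm_smul, hS, mul_one,
    mul_assoc]
  simp only [Complex.norm_real, norm_norm]
  exact mul_le_mul_of_nonneg_left (norm_inner_apply_self_le_of_norm_le_one hS.le hSn x)
    (norm_nonneg T)

end ContinuousLinearMap

/-- **Haagerup–de la Harpe inequality.** If `T` is a bounded operator on a complex
Hilbert space with `T ^ n = 0` for some `n ≥ 2`, then the numerical radius of `T`
satisfies `w(T) ≤ ‖T‖ · cos (π / (n+1))`. -/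
theorem numRadius_le_of_nilpotent {H : Type*} [NormedAddCommGroup H]
    [InnerProductSpace ℂ H] [CompleteSpace H]
    (n : ℕ) (hn : 2 ≤ n) (T : H →L[ℂ] H) (hT : T ^ n = 0) :
    sSup { r : ℝ | ∃ x : H, ‖x‖ = 1 ∧ r = ‖(inner ℂ (T x) x : ℂ)‖ }
      ≤ ‖T‖ * Real.cos (Real.pi / ((n : ℝ) + 1)) := by
  have hcos : 0 ≤ Real.cos (Real.pi / ((n : ℝ) + 1)) := by
    have hθ : 0 ≤ Real.pi / ((n : ℝ) + 1) := by positivity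
    refine Real.cos_nonneg_of_mem_Icc ⟨by linarith [Real.pi_pos], ?_⟩
    exact div_le_div_of_nonneg_left Real.pi_pos.le two_pos (by norm_cast; omega)
  refine Real.sSup_le ?_ (mul_nonneg (norm_nonneg T) hcos)
  rintro _ ⟨x, hx, rfl⟩
  simpa [hx] using T.norm_inner_apply_self_le_of_pow_eq_zero hT x
end

section
/- Let n ≥ 2 and let F(e^{it}) = ∑_{j=-(n-1)}^{n-1} c_j e^{ijt} be a trigonometric polynomial with complex coefficients satisfying F(e^{it}) ≥ 0 for all real t. Then for every integer k with 1 ≤ k ≤ n−1 one has |c_k| ≤ c_0 · cos( π / (⌊(n−1)/k⌋ + 2) ), where ⌊·⌋ denotes the integer part. -/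
/-!
Averaging `F` over the `k` points `(y + 2πr)/k` kills every coefficient whose index is not a
multiple of `k` and leaves the nonnegative trigonometric polynomial `∑_{|q| ≤ m} c_{kq} e^{iqy}` of
degree `m = ⌊(n-1)/k⌋`, so it suffices to bound `|c_1|` for a nonnegative polynomial of degree `m`.
For that, put `N = m + 2`, `α = π/N`, and sample at the `N` equally spaced nodes `x + 2πs/N` with
the nonnegative weights `cos α - cos ((2s+1)α)`. As a function of the node the weight is a
trigonometric polynomial of degree one, so the weighted sum only sees `c_{-1}, c_0, c_1`; since
`c_{-1} = conj c_1` it equals `N (c_0 cos α - Re (e^{i(x-α)} c_1))`, and choosing `x` so that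
`e^{i(x-α)} c_1 = |c_1|` gives `0 ≤ c_0 cos α - |c_1|`.
-/

open Complex Finset
open scoped Real ComplexOrder ComplexConjugate

noncomputable def trigPoly (d : ℕ) (c : ℤ → ℂ) (t : ℝ) : ℂ :=
  ∑ j ∈ Icc (-(d : ℤ)) d, c j * exp (I * j * t)

lemma sum_range_exp_equispaced {N : ℕ} (hN : N ≠ 0) (j : ℤ) (x : ℝ) :
    ∑ s ∈ range N, exp (I * j * ↑(x + 2 * π * s / N)) =
      if (N : ℤ) ∣ j then N * exp (I * j * x) else 0 := by
  set ζ := exp (2 * π * I / N)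
  have hζ : IsPrimitiveRoot ζ N := isPrimitiveRoot_exp N hN
  have hterm (s : ℕ) : exp (I * j * ↑(x + 2 * π * s / N)) = exp (I * j * x) * (ζ ^ j) ^ s := by
    rw [← exp_int_mul, ← exp_nat_mul, ← exp_add]
    congr 1
    push_cast
    ring
  simp_rw [hterm, ← mul_sum]
  split_ifs with h
  · rw [(hζ.zpow_eq_one_iff_dvd j).2 h]
    simp [mul_comm]
  · have hζjN : (ζ ^ j) ^ N = 1 := by
      rw [← zpow_natCast, ← zpow_mul, mul_comm, zpow_mul, zpow_natCast, hζ.pow_eq_one, one_zpow]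
    rw [geom_sum_eq ((hζ.zpow_eq_one_iff_dvd j).not.2 h), hζjN, sub_self, zero_div, mul_zero]

lemma sum_range_trigPoly_equispaced_div {k : ℕ} (hk : k ≠ 0) (d : ℕ) (c : ℤ → ℂ) (y : ℝ) :
    ∑ r ∈ range k, trigPoly d c (y / k + 2 * π * r / k) =
      k * trigPoly (d / k) (fun q => c (k * q)) y := by
  have hk' : (0 : ℤ) < k := by omega
  have hmem (q : ℤ) :
      (k : ℤ) * q ∈ Icc (-(d : ℤ)) d ↔ q ∈ Icc (-((d / k : ℕ) : ℤ)) (d / k : ℕ) := by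
    rw [mem_Icc, mem_Icc, Int.natCast_div, neg_le (a := (d : ℤ) / k), Int.le_ediv_iff_mul_le hk',
      Int.le_ediv_iff_mul_le hk']
    constructor <;> rintro ⟨h₁, h₂⟩ <;> constructor <;> linarith
  calc ∑ r ∈ range k, trigPoly d c (y / k + 2 * π * r / k)
      = ∑ j ∈ Icc (-(d : ℤ)) d, c j * ∑ r ∈ range k, exp (I * j * ↑(y / k + 2 * π * r / k)) := by
        simp_rw [trigPoly, mul_sum]
        exact sum_comm
    _ = ∑ j ∈ Icc (-(d : ℤ)) d with (k : ℤ) ∣ j, k * (c j * exp (I * j * ↑(y / k))) := by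
        rw [sum_filter]
        refine sum_congr rfl fun j _ => ?_
        rw [sum_range_exp_equispaced hk]
        split_ifs <;> ring
    _ = k * trigPoly (d / k) (fun q => c (k * q)) y := by
        rw [trigPoly, mul_sum]
        have hdiv (q : ℤ) : (k : ℤ) * q / k = q := Int.mul_ediv_cancel_left q hk'.ne'
        refine sum_nbij' (· / k) (k * ·) ?_ ?_ ?_ ?_ ?_
        · rintro _ hj
          obtain ⟨hj, q, rfl⟩ := mem_filter.1 hj
          simpa [hdiv] using (hmem q).1 hj
        · intro q hq
          exact mem_filter.2 ⟨(hmem q).2 hq, dvd_mul_right _ _⟩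
        · rintro _ hj
          obtain ⟨-, q, rfl⟩ := mem_filter.1 hj
          simp [hdiv]
        · simp [hdiv]
        · rintro _ hj
          obtain ⟨-, q, rfl⟩ := mem_filter.1 hj
          have hkC : (k : ℂ) ≠ 0 := Nat.cast_ne_zero.2 hk
          simp only [hdiv]
          push_cast
          field_simp

lemma sum_range_trigPoly_mul_exp_neg (d : ℕ) (c : ℤ → ℂ) {N : ℕ} {p : ℤ}
    (hp : p ∈ Icc (-(d : ℤ)) d) (hN : (d : ℤ) + |p| < N) (x : ℝ) :
    ∑ s ∈ range N, trigPoly d c (x + 2 * π * s / N) *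
      exp (-(I * p * ↑(x + 2 * π * s / N))) = N * c p := by
  have hN0 : N ≠ 0 := by
    rintro rfl
    have := abs_nonneg p
    push_cast at hN
    omega
  have hdvd : ∀ j ∈ Icc (-(d : ℤ)) d, (N : ℤ) ∣ j - p ↔ j = p := by
    intro j hj
    rw [mem_Icc] at hj
    have := le_abs_self p
    have := neg_abs_le p
    refine ⟨fun h => sub_eq_zero.1 (Int.eq_zero_of_abs_lt_dvd h ?_), fun h => by simp [h]⟩
    rw [abs_lt]
    constructor <;> omega
  calc ∑ s ∈ range N, trigPoly d c (x + 2 * π * s / N) *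
        exp (-(I * p * ↑(x + 2 * π * s / N)))
      = ∑ j ∈ Icc (-(d : ℤ)) d, c j *
          ∑ s ∈ range N, exp (I * ↑(j - p) * ↑(x + 2 * π * s / N)) := by
        simp_rw [trigPoly, sum_mul, mul_sum]
        rw [sum_comm]
        refine sum_congr rfl fun j _ => sum_congr rfl fun s _ => ?_
        rw [mul_assoc, ← exp_add]
        push_cast
        ring_nf
    _ = ∑ j ∈ Icc (-(d : ℤ)) d, if j = p then N * c p else 0 := by
        refine sum_congr rfl fun j hj => ?_
        rw [sum_range_exp_equispaced hN0, if_congr (hdvd j hj) rfl rfl]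
        split_ifs with h
        · subst h; simp [mul_comm]
        · rw [mul_zero]
    _ = N * c p := by rw [sum_ite_eq']; simp [hp]

lemma coeff_neg_eq_conj_of_trigPoly_real {d : ℕ} {c : ℤ → ℂ}
    (hreal : ∀ t, conj (trigPoly d c t) = trigPoly d c t) {j : ℤ} (hj : j ∈ Icc (-(d : ℤ)) d) :
    c (-j) = conj (c j) := by
  have hj' : -j ∈ Icc (-(d : ℤ)) d := by rw [mem_Icc] at hj ⊢; omega
  have hN : ∀ p ∈ Icc (-(d : ℤ)) d, (d : ℤ) + |p| < (2 * d + 1 : ℕ) := by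
    intro p hp
    rw [mem_Icc] at hp
    have := abs_le.2 (show -(d : ℤ) ≤ p ∧ p ≤ d from hp)
    push_cast
    omega
  apply mul_left_cancel₀ (Nat.cast_ne_zero.2 (by omega : 2 * d + 1 ≠ 0) : ((2 * d + 1 : ℕ) : ℂ) ≠ 0)
  conv_rhs => rw [← map_natCast conj, ← map_mul,
    ← sum_range_trigPoly_mul_exp_neg d c hj (hN j hj) 0, map_sum]
  rw [← sum_range_trigPoly_mul_exp_neg d c hj' (hN _ hj') 0]
  refine sum_congr rfl fun s _ => ?_
  rw [map_mul, hreal, ← exp_conj]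
  congr 2
  simp only [map_neg, map_mul, conj_I, conj_ofReal, map_intCast]
  push_cast
  ring

noncomputable def fejerWeight (N s : ℕ) : ℝ :=
  Real.cos (π / N) - Real.cos ((2 * s + 1) * π / N)

lemma fejerWeight_nonneg {N s : ℕ} (hs : s < N) : 0 ≤ fejerWeight N s := by
  have hN : (0 : ℝ) < N := Nat.cast_pos.2 (by omega)
  have hsN : (s : ℝ) + 1 ≤ N := by exact_mod_cast hs
  have hsin (u : ℝ) (hu0 : 0 ≤ u) (huN : u ≤ N) : 0 ≤ Real.sin (u * π / N) := by
    apply Real.sin_nonneg_of_nonneg_of_le_pi (by positivity)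
    rw [div_le_iff₀ hN]
    nlinarith [Real.pi_pos]
  rw [fejerWeight, Real.cos_sub_cos, show (π / N + (2 * s + 1) * π / N) / 2 = (s + 1) * π / N by
    ring, show (π / N - (2 * s + 1) * π / N) / 2 = -(s * π / N) by ring,
    Real.sin_neg]
  nlinarith [hsin (s + 1) (by positivity) hsN, hsin s (by positivity) (by linarith)]

lemma sum_range_fejerWeight_mul_trigPoly {d N : ℕ} (hd : 1 ≤ d) (hN : d + 1 < N) (c : ℤ → ℂ)
    (x : ℝ) :
    ∑ s ∈ range N, (fejerWeight N s : ℂ) * trigPoly d c (x + 2 * π * s / N) =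
      N * (Real.cos (π / N) * c 0 - (exp (I * ↑(x - π / N)) * c 1 +
        exp (-(I * ↑(x - π / N))) * c (-1)) / 2) := by
  set y := x - π / N
  set t : ℕ → ℝ := fun s => x + 2 * π * s / N
  have hmem : ∀ p : ℤ, |p| ≤ 1 → p ∈ Icc (-(d : ℤ)) d ∧ (d : ℤ) + |p| < N := by
    intro p hp
    rw [abs_le] at hp
    have := abs_le.2 hp
    rw [mem_Icc]
    omega
  have hterm (s : ℕ) :
      (fejerWeight N s : ℂ) * trigPoly d c (t s) =
        Real.cos (π / N) * (trigPoly d c (t s) * exp (-(I * ((0 : ℤ) : ℂ) * ↑(t s)))) -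
        exp (-(I * y)) / 2 * (trigPoly d c (t s) * exp (-(I * ((-1 : ℤ) : ℂ) * ↑(t s)))) -
        exp (I * y) / 2 * (trigPoly d c (t s) * exp (-(I * ((1 : ℤ) : ℂ) * ↑(t s)))) := by
    have hcos : ((Real.cos ((2 * s + 1) * π / N) : ℝ) : ℂ) =
        (exp (-(I * y)) * exp (-(I * ((-1 : ℤ) : ℂ) * ↑(t s))) +
          exp (I * y) * exp (-(I * ((1 : ℤ) : ℂ) * ↑(t s)))) / 2 := by
      rw [ofReal_cos, Complex.cos, ← exp_add, ← exp_add]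
      congr 3 <;> simp only [y, t] <;> push_cast <;> ring
    rw [fejerWeight, ofReal_sub, hcos]
    simp only [Int.cast_zero, mul_zero, zero_mul, neg_zero, exp_zero, mul_one]
    ring
  simp only [t] at hterm
  rw [sum_congr rfl fun s _ => hterm s, sum_sub_distrib, sum_sub_distrib, ← mul_sum, ← mul_sum,
    ← mul_sum, sum_range_trigPoly_mul_exp_neg d c (hmem 0 (by simp)).1 (hmem 0 (by simp)).2,
    sum_range_trigPoly_mul_exp_neg d c (hmem (-1) (by simp)).1 (hmem (-1) (by simp)).2,
    sum_range_trigPoly_mul_exp_neg d c (hmem 1 (by simp)).1 (hmem 1 (by simp)).2]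
  ring

theorem norm_coeff_one_le_of_trigPoly_nonneg {d : ℕ} (hd : 1 ≤ d) {c : ℤ → ℂ}
    (hnonneg : ∀ t, 0 ≤ trigPoly d c t) :
    ‖c 1‖ ≤ (c 0).re * Real.cos (π / (d + 2)) := by
  set θ := (c 1).arg
  have hsym : c (-1) = conj (c 1) :=
    coeff_neg_eq_conj_of_trigPoly_real
      (fun t => conj_eq_iff_im.2 (Complex.nonneg_iff.1 (hnonneg t)).2.symm) (by simp; omega)
  have hrot : exp (I * ↑(-θ)) * c 1 = ‖c 1‖ := by
    conv_lhs => rw [← norm_mul_exp_arg_mul_I (c 1)]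
    rw [mul_left_comm, ← exp_add, show I * ↑(-θ) + ↑θ * I = 0 by push_cast; ring, exp_zero, mul_one]
  have hrot' : exp (-(I * ↑(-θ))) * conj (c 1) = ‖c 1‖ := by
    simpa [← exp_conj] using congrArg conj hrot
  have hS := sum_range_fejerWeight_mul_trigPoly hd (by omega : d + 1 < d + 2) c
    (π / (d + 2 : ℕ) - θ)
  rw [show π / (d + 2 : ℕ) - θ - π / (d + 2 : ℕ) = -θ by ring, hsym, hrot, hrot'] at hS
  have hnonneg_sum := sum_nonneg fun s (hs : s ∈ range (d + 2)) =>
    mul_nonneg (zero_le_real.2 (fejerWeight_nonneg (mem_range.1 hs)))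
      (hnonneg (π / (d + 2 : ℕ) - θ + 2 * π * s / (d + 2 : ℕ)))
  rw [hS] at hnonneg_sum
  have hre := (Complex.nonneg_iff.1 hnonneg_sum).1
  simp only [mul_re, sub_re, ofReal_re, ofReal_im, natCast_re, natCast_im, zero_mul, sub_zero,
    div_ofNat_re, add_re] at hre
  push_cast at hre
  linarith [(mul_nonneg_iff_of_pos_left (by positivity : (0 : ℝ) < d + 2)).1 hre]

theorem egervary_szasz_general (n : ℕ) (c : ℤ → ℂ)
    (hpos : ∀ t : ℝ,
      (∑ j ∈ Finset.Icc (-(n : ℤ) + 1) ((n : ℤ) - 1),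
          c j * Complex.exp (Complex.I * (j : ℂ) * (t : ℂ))).im = 0 ∧
      0 ≤ (∑ j ∈ Finset.Icc (-(n : ℤ) + 1) ((n : ℤ) - 1),
          c j * Complex.exp (Complex.I * (j : ℂ) * (t : ℂ))).re)
    (k : ℕ) (hk1 : 1 ≤ k) (hkn : k ≤ n - 1) :
    ‖c k‖ ≤ (c 0).re * Real.cos (Real.pi / (((n - 1) / k : ℕ) + 2)) := by
  have hF (t : ℝ) : 0 ≤ trigPoly (n - 1) c t := by
    have hIcc : Icc (-((n - 1 : ℕ) : ℤ)) (n - 1 : ℕ) = Icc (-(n : ℤ) + 1) (n - 1) := by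
      congr 1 <;> omega
    rw [trigPoly, hIcc]
    exact Complex.nonneg_iff.2 ⟨(hpos t).2, (hpos t).1.symm⟩
  have hk : k ≠ 0 := by omega
  have hG (y : ℝ) : 0 ≤ trigPoly ((n - 1) / k) (fun q => c (k * q)) y := by
    have hsum : 0 ≤ (k : ℂ) * trigPoly ((n - 1) / k) (fun q => c (k * q)) y :=
      sum_range_trigPoly_equispaced_div hk (n - 1) c y ▸ sum_nonneg fun _ _ => hF _
    have hk_inv := mul_nonneg (zero_le_real.2 (inv_nonneg.2 (Nat.cast_nonneg k))) hsum
    rwa [← mul_assoc, ofReal_inv, ofReal_natCast, inv_mul_cancel₀ (Nat.cast_ne_zero.2 hk),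
      one_mul] at hk_inv
  have hm : 1 ≤ (n - 1) / k := (Nat.one_le_div_iff (Nat.pos_of_ne_zero hk)).2 hkn
  simpa using norm_coeff_one_le_of_trigPoly_nonneg hm hG

/-- **Egerváry–Szász inequality.** If `∑_{j=-(n-1)}^{n-1} c_j e^{ijt}` is a
trigonometric polynomial which is nonnegative on the torus, then for `1 ≤ k ≤ n-1`
one has `|c_k| ≤ c_0 · cos (π / (⌊(n-1)/k⌋ + 2))`. -/
theorem egervary_szasz (n : ℕ) (hn : 2 ≤ n) (c : ℤ → ℂ)
    (hpos : ∀ t : ℝ,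
      (∑ j ∈ Finset.Icc (-(n : ℤ) + 1) ((n : ℤ) - 1),
          c j * Complex.exp (Complex.I * (j : ℂ) * (t : ℂ))).im = 0 ∧
      0 ≤ (∑ j ∈ Finset.Icc (-(n : ℤ) + 1) ((n : ℤ) - 1),
          c j * Complex.exp (Complex.I * (j : ℂ) * (t : ℂ))).re)
    (k : ℕ) (hk1 : 1 ≤ k) (hkn : k ≤ n - 1) :
    ‖c k‖ ≤ (c 0).re * Real.cos (Real.pi / (((n - 1) / k : ℕ) + 2)) :=
  egervary_szasz_general n c hpos k hk1 hkn
end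

section
/- Let n ≥ 2 and 0 ≤ α < 1, and let t₁^{(n)} be the smallest zero in (0, π) of the function q_{n,α}(t) = sin((n+1)t) − 2α·sin(nt) + α²·sin((n−1)t). Then (2/(n+1))·arccos(α) ≤ t₁^{(n)} ≤ arccos(α). -/
/-!
Write `e^{it} - α = ρ e^{i(t + ψ)}` with `ψ = arg (1 - α e^{-it})`. Then
`q_{n,α}(t) = Im (e^{i(n-1)t} (e^{it} - α)²) = ρ² sin ((n+1)t + 2ψ)`, so the zeros of `q_{n,α}` are
those of `sin ∘ G` with `G t = (n+1)t + 2ψ(t)`. For `α = cos θ` the point `1 - α e^{-it}` lies on the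
circle of radius `α` about `1`, which is seen from `0` under the half-angle `π/2 - θ`; hence
`0 ≤ ψ ≤ π/2 - θ` on `[0, π]`, with equality at `t = θ`. So `0 < G t < π` whenever `0 < (n+1)t < 2θ`,
while on `[0, θ]` the continuous `G` runs from `0` to `π + (n-1)θ ≥ π`, so it takes the value `π`.
-/

open Real Set

namespace SmallestZero

theorem sin_two_mul_arctan (x : ℝ) : sin (2 * arctan x) = 2 * x / (1 + x ^ 2) := by
  have h : √(1 + x ^ 2) ^ 2 = 1 + x ^ 2 := sq_sqrt (by positivity)
  rw [sin_two_mul, sin_arctan, cos_arctan]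
  field_simp
  rw [h]

theorem cos_two_mul_arctan (x : ℝ) : cos (2 * arctan x) = (1 - x ^ 2) / (1 + x ^ 2) := by
  rw [cos_two_mul, cos_sq_arctan]
  field_simp
  ring

noncomputable def ψ (α t : ℝ) : ℝ := arctan (α * sin t / (1 - α * cos t))

theorem one_sub_mul_cos_pos {α : ℝ} (hα : |α| < 1) (t : ℝ) : 0 < 1 - α * cos t := by
  have : |α * cos t| ≤ |α| := by
    rw [abs_mul]; exact mul_le_of_le_one_right (abs_nonneg α) (abs_cos_le_one t)
  linarith [le_abs_self (α * cos t)]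

theorem sin_sub_two_mul_sin_add_sq_mul_sin {α : ℝ} (hα : |α| < 1) (m t : ℝ) :
    sin ((m + 1) * t) - 2 * α * sin (m * t) + α ^ 2 * sin ((m - 1) * t)
      = (1 - 2 * α * cos t + α ^ 2) * sin ((m + 1) * t + 2 * ψ α t) := by
  have hc := one_sub_mul_cos_pos hα t
  have hr : 1 - 2 * α * cos t + α ^ 2 = (1 - α * cos t) ^ 2 + (α * sin t) ^ 2 := by
    linear_combination (-α ^ 2) * sin_sq_add_cos_sq t
  rw [show m * t = (m + 1) * t - t by ring, show (m - 1) * t = (m + 1) * t - 2 * t by ring,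
    sin_add, ψ, sin_two_mul_arctan, cos_two_mul_arctan, hr, sin_sub, sin_sub, sin_two_mul,
    cos_two_mul']
  field_simp
  ring

theorem sin_sub_two_mul_sin_add_sq_mul_sin_eq_zero_iff {α : ℝ} (hα : |α| < 1) (m t : ℝ) :
    sin ((m + 1) * t) - 2 * α * sin (m * t) + α ^ 2 * sin ((m - 1) * t) = 0
      ↔ sin ((m + 1) * t + 2 * ψ α t) = 0 := by
  have hr : 0 < 1 - 2 * α * cos t + α ^ 2 := by
    nlinarith [one_sub_mul_cos_pos hα t, sq_nonneg (α * sin t), sin_sq_add_cos_sq t]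
  rw [sin_sub_two_mul_sin_add_sq_mul_sin hα, mul_eq_zero, or_iff_right hr.ne']

theorem continuous_ψ {α : ℝ} (hα : |α| < 1) : Continuous (ψ α) :=
  continuous_arctan.comp <| (continuous_const.mul continuous_sin).div
    (continuous_const.sub (continuous_const.mul continuous_cos))
    fun t => (one_sub_mul_cos_pos hα t).ne'

@[simp]
theorem ψ_zero (α : ℝ) : ψ α 0 = 0 := by
  simp [ψ]

theorem ψ_nonneg {α t : ℝ} (hα0 : 0 ≤ α) (hα1 : α ≤ 1) (ht : 0 ≤ sin t) : 0 ≤ ψ α t := by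
  have : α * cos t ≤ 1 := by nlinarith [cos_le_one t, neg_one_le_cos t]
  exact arctan_nonneg.2 (div_nonneg (mul_nonneg hα0 ht) (by linarith))

theorem tan_pi_div_two_sub_eq_cos_div_sin (θ : ℝ) : tan (π / 2 - θ) = cos θ / sin θ := by
  rw [tan_pi_div_two_sub, tan_eq_sin_div_cos, inv_div]

theorem ψ_cos_self {θ : ℝ} (h0 : 0 < θ) (hπ : θ < π) : ψ (cos θ) θ = π / 2 - θ := by
  have hs : sin θ ≠ 0 := (sin_pos_of_pos_of_lt_pi h0 hπ).ne'
  have : cos θ * sin θ / (1 - cos θ * cos θ) = cos θ / sin θ := by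
    rw [show 1 - cos θ * cos θ = sin θ ^ 2 by linear_combination -sin_sq_add_cos_sq θ]
    field_simp
  rw [ψ, this, ← tan_pi_div_two_sub_eq_cos_div_sin, arctan_tan (by linarith) (by linarith)]

theorem ψ_cos_le {θ : ℝ} (h0 : 0 < θ) (h2 : θ ≤ π / 2) (t : ℝ) : ψ (cos θ) t ≤ π / 2 - θ := by
  have hs : 0 < sin θ := sin_pos_of_pos_of_lt_pi h0 (by linarith [pi_pos])
  have hc : 0 ≤ cos θ := cos_nonneg_of_mem_Icc ⟨by linarith [pi_pos], h2⟩
  have habs : |cos θ| < 1 := by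
    rw [← sq_lt_one_iff_abs_lt_one]; nlinarith [sin_sq_add_cos_sq θ]
  rw [ψ, ← arctan_tan (x := π / 2 - θ) (by linarith) (by linarith), arctan_le_arctan_iff,
    tan_pi_div_two_sub_eq_cos_div_sin, div_le_div_iff₀ (one_sub_mul_cos_pos habs t) hs]
  -- `cos θ cos t + sin θ sin t = cos (t - θ) ≤ 1`
  nlinarith [mul_le_mul_of_nonneg_left (cos_le_one (t - θ)) hc, cos_sub t θ]

end SmallestZero

open SmallestZero

/-- For `n ≥ 2` and `0 ≤ α < 1`, the smallest zero `t₁` in `(0, π)` of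
`q_{n,α}(t) = sin((n+1)t) − 2α sin(nt) + α² sin((n−1)t)` satisfies
`(2/(n+1))·arccos α ≤ t₁ ≤ arccos α`. -/
theorem smallest_zero_bounds (n : ℕ) (hn : 2 ≤ n) (α : ℝ) (hα0 : 0 ≤ α) (hα1 : α < 1)
    (t₁ : ℝ)
    (ht₁ : IsLeast {t : ℝ | t ∈ Set.Ioo 0 Real.pi ∧
      Real.sin (((n : ℝ) + 1) * t) - 2 * α * Real.sin ((n : ℝ) * t)
        + α ^ 2 * Real.sin (((n : ℝ) - 1) * t) = 0} t₁) :
    (2 / ((n : ℝ) + 1)) * Real.arccos α ≤ t₁ ∧ t₁ ≤ Real.arccos α := by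
  obtain ⟨⟨⟨ht₁0, ht₁π⟩, hq⟩, ht₁_least⟩ := ht₁
  have hα : |α| < 1 := abs_lt.2 ⟨by linarith, hα1⟩
  have hn1 : (1 : ℝ) ≤ n := by exact_mod_cast (by omega : 1 ≤ n)
  set θ := arccos α
  have hθ0 : 0 < θ := arccos_pos.2 hα1
  have hθ2 : θ ≤ π / 2 := arccos_le_pi_div_two.2 hα0
  have hψ_le : ∀ t, ψ α t ≤ π / 2 - θ := by
    rw [← cos_arccos (by linarith) hα1.le]; exact ψ_cos_le hθ0 hθ2
  rw [sin_sub_two_mul_sin_add_sq_mul_sin_eq_zero_iff hα] at hq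
  constructor
  · by_contra! hlt
    have hlt' : ((n : ℝ) + 1) * t₁ < 2 * θ := by
      rwa [div_mul_eq_mul_div, lt_div_iff₀' (by positivity)] at hlt
    have hψ0 := ψ_nonneg hα0 hα1.le (sin_nonneg_of_nonneg_of_le_pi ht₁0.le ht₁π.le)
    refine (sin_pos_of_pos_of_lt_pi ?_ ?_).ne' hq
    · nlinarith
    · linarith [hψ_le t₁]
  · have hψ := continuous_ψ hα
    obtain ⟨s, ⟨hs_nonneg, hsθ⟩, hs⟩ : ∃ s ∈ Icc 0 θ, ((n : ℝ) + 1) * s + 2 * ψ α s = π := by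
      refine intermediate_value_Icc hθ0.le (by fun_prop) ⟨?_, ?_⟩
      · simp [pi_nonneg]
      · rw [← cos_arccos (by linarith) hα1.le, ψ_cos_self hθ0 (by linarith)]
        nlinarith
    have hs_pos : 0 < s := hs_nonneg.lt_of_ne (by rintro rfl; simp [pi_ne_zero.symm] at hs)
    refine (ht₁_least ⟨⟨hs_pos, by linarith⟩, ?_⟩).trans hsθ
    rw [sin_sub_two_mul_sin_add_sq_mul_sin_eq_zero_iff hα, hs, sin_pi]
end

section
/- Let n ≥ 2 and 0 ≤ α < 1. For every integer k with 1 ≤ k ≤ n, the function q_{n,α}(t) = sin((n+1)t) − 2α·sin(nt) + α²·sin((n−1)t) has a zero t in the interval ((k−1)π/(n+1), kπ/(n+1)]; in particular q_{n,α} has at least n zeros in (0, π). -/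
/-!
At the nodes `t_j = jπ/(n+1)` the first term of `q_{n,α}` vanishes and the other two reduce to
`q_{n,α}(t_j) = (-1)^j · 2α · sin t_j · (1 - α cos t_j)`, whose sign is `(-1)^j` for `0 < α < 1`
and `1 ≤ j ≤ n`. The intermediate value theorem then gives a zero between consecutive nodes. On
the first interval one compares instead with `t = 0`, where `q_{n,α}` vanishes with positive slope
`n(1-α)² + 1 - α²`. For `α = 0` the right endpoint `t_k` is itself a zero.
-/

open Real Set Topology

theorem exists_zero_mem_Ioo_of_mul_neg {f : ℝ → ℝ} {a b : ℝ} (hab : a ≤ b)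
    (hf : ContinuousOn f (Icc a b)) (hsign : f a * f b < 0) : ∃ t ∈ Ioo a b, f t = 0 := by
  rcases mul_neg_iff.mp hsign with ⟨ha, hb⟩ | ⟨ha, hb⟩
  · exact intermediate_value_Ioo' hab hf ⟨hb, ha⟩
  · exact intermediate_value_Ioo hab hf ⟨ha, hb⟩

theorem HasDerivAt.exists_mem_Ioo_lt_of_pos {f : ℝ → ℝ} {c a b : ℝ} (hf : HasDerivAt f c a)
    (hc : 0 < c) (hab : a < b) : ∃ t ∈ Ioo a b, f a < f t := by
  have hslope : ∀ᶠ t in 𝓝[>] a, 0 < slope f a t :=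
    (hasDerivAt_iff_tendsto_slope.mp hf).mono_left (nhdsGT_le_nhdsNE a)
      |>.eventually (eventually_gt_nhds hc)
  obtain ⟨t, hpos, ht⟩ := (hslope.and (Ioo_mem_nhdsGT hab)).exists
  exact ⟨t, ht, (slope_pos_iff ht.1).mp hpos⟩

/-- The paper's `q_{n,α}`, with `n` allowed to be real. -/
noncomputable def trigQ (n α t : ℝ) : ℝ :=
  sin ((n + 1) * t) - 2 * α * sin (n * t) + α ^ 2 * sin ((n - 1) * t)

theorem continuous_trigQ (n α : ℝ) : Continuous (trigQ n α) := by
  unfold trigQ; fun_prop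

theorem trigQ_zero (n α : ℝ) : trigQ n α 0 = 0 := by
  simp [trigQ]

theorem hasDerivAt_trigQ_zero (n α : ℝ) :
    HasDerivAt (trigQ n α) (n * (1 - α) ^ 2 + (1 - α ^ 2)) 0 := by
  have hsin (c : ℝ) : HasDerivAt (fun t => sin (c * t)) c 0 := by
    simpa using ((hasDerivAt_id (0 : ℝ)).const_mul c).sin
  exact (((hsin (n + 1)).sub ((hsin n).const_mul (2 * α))).add
    ((hsin (n - 1)).const_mul (α ^ 2))).congr_deriv (by ring)

theorem trigQ_node (n α : ℝ) (hn : n + 1 ≠ 0) (j : ℕ) :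
    trigQ n α (j * π / (n + 1)) =
      (-1) ^ j * (2 * α * (sin (j * π / (n + 1)) * (1 - α * cos (j * π / (n + 1))))) := by
  set t := j * π / (n + 1)
  have h₁ : (n + 1) * t = j * π := by simp only [t]; field_simp
  have h₂ : n * t = j * π - t := by linear_combination h₁
  have h₃ : (n - 1) * t = j * π - 2 * t := by linear_combination h₁
  rw [trigQ, h₁, h₂, h₃, sin_nat_mul_pi, sin_nat_mul_pi_sub, sin_nat_mul_pi_sub, sin_two_mul]
  ring

theorem sin_mul_one_sub_mul_cos_pos {α x : ℝ} (hα : |α| ≤ 1) (hx₀ : 0 < x) (hxπ : x < π) :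
    0 < sin x * (1 - α * cos x) := by
  have hsin := sin_pos_of_pos_of_lt_pi hx₀ hxπ
  have hcos : |cos x| < 1 := by
    rw [abs_lt]; constructor <;> nlinarith [sin_sq_add_cos_sq x]
  have : α * cos x < 1 :=
    calc α * cos x ≤ |α| * |cos x| := by rw [← abs_mul]; exact le_abs_self _
      _ < 1 := by nlinarith [abs_nonneg α, abs_nonneg (cos x)]
  exact mul_pos hsin (by linarith)

theorem neg_one_pow_mul_trigQ_node_pos {n α : ℝ} (hα₀ : 0 < α) (hα₁ : α ≤ 1) {j : ℕ} (hj : 1 ≤ j)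
    (hjn : j < n + 1) : 0 < (-1) ^ j * trigQ n α (j * π / (n + 1)) := by
  have hN : 0 < n + 1 := by linarith [(Nat.cast_nonneg j : (0 : ℝ) ≤ j)]
  have hj₀ : (0 : ℝ) < j := by exact_mod_cast hj
  have hnode : 0 < sin (j * π / (n + 1)) * (1 - α * cos (j * π / (n + 1))) := by
    refine sin_mul_one_sub_mul_cos_pos (abs_le.mpr ⟨by linarith, hα₁⟩) (by positivity) ?_
    rw [div_lt_iff₀ hN]
    nlinarith [pi_pos]
  rw [trigQ_node n α hN.ne', ← mul_assoc, ← mul_pow, neg_one_mul, neg_neg, one_pow, one_mul]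
  positivity

theorem trigQ_node_mul_trigQ_node_succ_neg {n α : ℝ} (hα₀ : 0 < α) (hα₁ : α ≤ 1) {j : ℕ}
    (hj : 1 ≤ j) (hjn : j + 1 < n + 1) :
    trigQ n α (j * π / (n + 1)) * trigQ n α ((j + 1 : ℕ) * π / (n + 1)) < 0 := by
  have hcur := neg_one_pow_mul_trigQ_node_pos hα₀ hα₁ hj (by linarith)
  have hnext := neg_one_pow_mul_trigQ_node_pos hα₀ hα₁ (j := j + 1) (by omega)
    (by exact_mod_cast hjn)
  have hsq : ((-1 : ℝ) ^ j) ^ 2 = 1 := by rw [← pow_mul, mul_comm, pow_mul]; norm_num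
  rw [pow_succ] at hnext
  nlinarith [mul_pos hcur hnext]

theorem exists_trigQ_eq_zero_mem_Ioo_first_node {n α : ℝ} (hn : 0 < n) (hα₀ : 0 < α)
    (hα₁ : α < 1) : ∃ t ∈ Ioo 0 (π / (n + 1)), trigQ n α t = 0 := by
  obtain ⟨s, hs, hqs⟩ := (hasDerivAt_trigQ_zero n α).exists_mem_Ioo_lt_of_pos
    (by nlinarith) (by positivity : 0 < π / (n + 1))
  rw [trigQ_zero] at hqs
  have hq₁ := neg_one_pow_mul_trigQ_node_pos hα₀ hα₁.le (j := 1) le_rfl (by simpa using hn)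
  rw [pow_one, neg_one_mul, neg_pos, Nat.cast_one, one_mul] at hq₁
  obtain ⟨t, ht, hqt⟩ := exists_zero_mem_Ioo_of_mul_neg hs.2.le
    (continuous_trigQ n α).continuousOn (mul_neg_of_pos_of_neg hqs hq₁)
  exact ⟨t, ⟨hs.1.trans ht.1, ht.2⟩, hqt⟩

theorem zero_in_each_interval_general (n : ℕ) (α : ℝ) (hα0 : 0 ≤ α) (hα1 : α < 1)
    (k : ℕ) (hk1 : 1 ≤ k) (hkn : k ≤ n) :
    ∃ t ∈ Set.Ioc (((k : ℝ) - 1) * Real.pi / ((n : ℝ) + 1))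
        ((k : ℝ) * Real.pi / ((n : ℝ) + 1)),
      Real.sin (((n : ℝ) + 1) * t) - 2 * α * Real.sin ((n : ℝ) * t)
        + α ^ 2 * Real.sin (((n : ℝ) - 1) * t) = 0 := by
  have hN : (0 : ℝ) < n + 1 := by positivity
  obtain ⟨m, rfl⟩ := Nat.exists_eq_add_of_le' hk1
  have hkn' : ((m + 1 : ℕ) : ℝ) < n + 1 := by exact_mod_cast Nat.lt_succ_of_le hkn
  rw [show ((m + 1 : ℕ) : ℝ) - 1 = m by push_cast; ring]
  change ∃ t ∈ Ioc (m * π / (n + 1)) ((m + 1 : ℕ) * π / (n + 1)), trigQ n α t = 0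
  rcases hα0.eq_or_lt with rfl | hα
  · refine ⟨_, ⟨by gcongr; linarith, le_rfl⟩, ?_⟩
    rw [trigQ_node _ _ hN.ne']; ring
  suffices ∃ t ∈ Ioo (m * π / (n + 1)) ((m + 1 : ℕ) * π / (n + 1)), trigQ n α t = 0 by
    obtain ⟨t, ht, hqt⟩ := this
    exact ⟨t, Ioo_subset_Ioc_self ht, hqt⟩
  rcases m with _ | j
  · simpa using exists_trigQ_eq_zero_mem_Ioo_first_node (by exact_mod_cast hkn) hα hα1
  · exact exists_zero_mem_Ioo_of_mul_neg (by gcongr; linarith)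
      (continuous_trigQ n α).continuousOn
      (trigQ_node_mul_trigQ_node_succ_neg hα hα1.le le_add_self (by exact_mod_cast hkn'))

/-- For `n ≥ 2`, `0 ≤ α < 1` and each `1 ≤ k ≤ n`, the function
`q_{n,α}(t) = sin((n+1)t) − 2α sin(nt) + α² sin((n−1)t)` has a zero in the
interval `((k−1)π/(n+1), kπ/(n+1)]`; in particular it has at least `n` zeros
in `(0, π)`. -/
theorem zero_in_each_interval (n : ℕ) (hn : 2 ≤ n) (α : ℝ) (hα0 : 0 ≤ α) (hα1 : α < 1)
    (k : ℕ) (hk1 : 1 ≤ k) (hkn : k ≤ n) :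
    ∃ t ∈ Set.Ioc (((k : ℝ) - 1) * Real.pi / ((n : ℝ) + 1))
        ((k : ℝ) * Real.pi / ((n : ℝ) + 1)),
      Real.sin (((n : ℝ) + 1) * t) - 2 * α * Real.sin ((n : ℝ) * t)
        + α ^ 2 * Real.sin (((n : ℝ) - 1) * t) = 0 :=
  zero_in_each_interval_general n α hα0 hα1 k hk1 hkn
end

section
/- Let n ≥ 2 and 0 ≤ α < 1, and let λ₁^{(n)} be the largest eigenvalue of the real symmetric n×n matrix K_n(α) = (α^{|r−s|})_{r,s=1}^{n}. Then 1 ≤ λ₁^{(n)} ≤ (1 − α²) / (1 − 2α·cos( (2/(n+1))·arccos(α) ) + α²). -/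
/-!
Up to the factor `1 - α²`, the inverse of `K_n(α)` is the tridiagonal matrix `T` with diagonal
`(1, 1 + α², …, 1 + α², 1)` and off-diagonal entries `-α`, so an eigenvalue `λ` of `K_n(α)` gives
the eigenvalue `(1 - α²) / λ` of `T`. Off the diagonal `T` is nonpositive, so a positive vector `w`
with `T w ≥ d w` entrywise forces `T ≥ d` as a quadratic form. The weight
`w_k = cos (φ (2k - n + 1) / (n + 1))` with `φ = arccos α` satisfies the interior recurrence
`T w = (1 - 2α cos (2φ / (n + 1)) + α²) w` exactly, and `w_{-1} = w_n = α` makes the two boundary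
rows only larger. The lower bound comes from the trace: the eigenvalues sum to `n`.
-/

open Finset Matrix

section PowNatAbs

variable {R : Type*} [CommRing R] (α : R)

theorem pow_natAbs_add_one {k : ℤ} (hk : 0 ≤ k) : α ^ (k + 1).natAbs = α * α ^ k.natAbs := by
  rw [show (k + 1).natAbs = k.natAbs + 1 by omega, pow_succ']

theorem pow_natAbs_sub_one {k : ℤ} (hk : k ≤ 0) : α ^ (k - 1).natAbs = α * α ^ k.natAbs := by
  rw [show (k - 1).natAbs = k.natAbs + 1 by omega, pow_succ']

theorem pow_natAbs_stencil (k : ℤ) :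
    (1 + α ^ 2) * α ^ k.natAbs - α * (α ^ (k - 1).natAbs + α ^ (k + 1).natAbs) =
      if k = 0 then 1 - α ^ 2 else 0 := by
  rcases lt_trichotomy k 0 with hk | rfl | hk
  · have h : α ^ k.natAbs = α * α ^ (k + 1).natAbs := by
      simpa using pow_natAbs_sub_one α (k := k + 1) (by omega)
    rw [if_neg hk.ne, pow_natAbs_sub_one α hk.le, h]
    ring
  · simp only [Int.natAbs_zero, zero_sub, zero_add, Int.natAbs_neg, Int.natAbs_one, if_true]
    ring
  · have h : α ^ k.natAbs = α * α ^ (k - 1).natAbs := by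
      simpa using pow_natAbs_add_one α (k := k - 1) (by omega)
    rw [if_neg hk.ne', pow_natAbs_add_one α hk.le, h]
    ring

end PowNatAbs

theorem Fin.sum_ite_intCast_eq {M : Type*} [AddCommMonoid M] (n : ℕ) (g : ℤ → M) (m : ℤ) :
    ∑ s : Fin n, (if (s : ℤ) = m then g s else 0) = if 0 ≤ m ∧ m < n then g m else 0 := by
  split_ifs with hm
  · rw [sum_eq_single ⟨m.toNat, by omega⟩]
    · simp [Int.toNat_of_nonneg hm.1]
    · intro s _ hs
      exact if_neg fun h => hs (Fin.ext (by simp; omega))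
    · simp
  · exact sum_eq_zero fun s _ => if_neg (by omega)

namespace Matrix

variable {ι : Type*} [Fintype ι]

theorem IsHermitian.exists_eigenvector_trace_le_card_mul [DecidableEq ι] [Nonempty ι]
    {A : Matrix ι ι ℝ} (hA : A.IsHermitian) :
    ∃ μ, ∃ v : ι → ℝ, v ≠ 0 ∧ A *ᵥ v = μ • v ∧ A.trace ≤ Fintype.card ι * μ := by
  have hsum : ∑ _i : ι, A.trace / Fintype.card ι ≤ ∑ i, hA.eigenvalues i := by
    rw [sum_const, card_univ, nsmul_eq_mul, mul_div_cancel₀ _ (by positivity),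
      hA.trace_eq_sum_eigenvalues]
    rfl
  obtain ⟨i, -, hi⟩ := exists_le_of_sum_le univ_nonempty hsum
  refine ⟨hA.eigenvalues i, hA.eigenvectorBasis i, ?_, hA.mulVec_eigenvectorBasis i, ?_⟩
  · simpa using hA.eigenvectorBasis.orthonormal.ne_zero i
  · rwa [div_le_iff₀' (by positivity)] at hi

/- Weighted AM–GM on the off-diagonal terms, `2 yᵢ yⱼ ≤ (wⱼ / wᵢ) yᵢ² + (wᵢ / wⱼ) yⱼ²`, bounds the
form below by `∑ᵢ yᵢ² (A w)ᵢ / wᵢ`. -/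
theorem mul_dotProduct_self_le_dotProduct_mulVec {A : Matrix ι ι ℝ} (hA : A.IsSymm)
    (hA_off : ∀ i j, i ≠ j → A i j ≤ 0) {w : ι → ℝ} (hw : ∀ i, 0 < w i) {d : ℝ}
    (hd : ∀ i, d * w i ≤ (A *ᵥ w) i) (y : ι → ℝ) :
    d * (y ⬝ᵥ y) ≤ y ⬝ᵥ (A *ᵥ y) := by
  set S := ∑ i, ∑ j, A i j * (w j / w i * y i ^ 2)
  have hS : d * (y ⬝ᵥ y) ≤ S :=
    calc d * (y ⬝ᵥ y) = ∑ i, y i ^ 2 / w i * (d * w i) := by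
          simp only [dotProduct, mul_sum]
          refine sum_congr rfl fun i _ => ?_
          field_simp [(hw i).ne']
      _ ≤ ∑ i, y i ^ 2 / w i * (A *ᵥ w) i :=
          sum_le_sum fun i _ => mul_le_mul_of_nonneg_left (hd i) (by have := hw i; positivity)
      _ = S := by
          simp only [S, mulVec, dotProduct, mul_sum]
          exact sum_congr rfl fun i _ => sum_congr rfl fun j _ => by ring
  have hS_symm : ∑ i, ∑ j, A i j * (w i / w j * y j ^ 2) = S := by
    rw [sum_comm]
    exact sum_congr rfl fun i _ => sum_congr rfl fun j _ => by rw [hA.apply i j]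
  have hterm : ∀ i j, A i j * (w j / w i * y i ^ 2 + w i / w j * y j ^ 2) ≤
      2 * (A i j * (y i * y j)) := by
    intro i j
    obtain rfl | hij := eq_or_ne i j
    · rw [div_self (hw i).ne', one_mul]
      exact le_of_eq (by ring)
    · have := hw i
      have := hw j
      have hamgm : w j / w i * y i ^ 2 + w i / w j * y j ^ 2 - 2 * (y i * y j) =
          (w j * y i - w i * y j) ^ 2 / (w i * w j) := by
        field_simp
        ring
      have : 0 ≤ (w j * y i - w i * y j) ^ 2 / (w i * w j) := by positivity
      nlinarith [hA_off i j hij]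
  have : 2 * S ≤ 2 * (y ⬝ᵥ (A *ᵥ y)) :=
    calc 2 * S = ∑ i, ∑ j, A i j * (w j / w i * y i ^ 2 + w i / w j * y j ^ 2) := by
          rw [two_mul]
          nth_rewrite 2 [← hS_symm]
          simp only [S, mul_add, sum_add_distrib]
      _ ≤ ∑ i, ∑ j, 2 * (A i j * (y i * y j)) :=
          sum_le_sum fun i _ => sum_le_sum fun j _ => hterm i j
      _ = 2 * (y ⬝ᵥ (A *ᵥ y)) := by
          simp only [dotProduct, mulVec, mul_sum]
          exact sum_congr rfl fun i _ => sum_congr rfl fun j _ => by ring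
  linarith

end Matrix

section KMS

variable {R : Type*} [CommRing R] (n : ℕ) (α : R)

def kmsMatrix : Matrix (Fin n) (Fin n) R := of fun r s => α ^ ((r : ℤ) - (s : ℤ)).natAbs

/-- `(1 - α²) • (kmsMatrix n α)⁻¹`: diagonal `(1, 1 + α², …, 1 + α², 1)` (just `1 - α²` when
`n = 1`), off-diagonal `-α`. -/
def kmsTridiag : Matrix (Fin n) (Fin n) R := of fun r s =>
  (if s = r then
      1 + α ^ 2 - (if (r : ℕ) = 0 then α ^ 2 else 0) - (if (r : ℕ) + 1 = n then α ^ 2 else 0)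
    else 0) -
    α * ((if (s : ℤ) = r - 1 then 1 else 0) + (if (s : ℤ) = r + 1 then 1 else 0))

theorem kmsMatrix_isSymm : (kmsMatrix n α).IsSymm :=
  IsSymm.ext fun r s => by rw [kmsMatrix, of_apply, of_apply, ← Int.natAbs_neg, neg_sub]

theorem kmsMatrix_trace : (kmsMatrix n α).trace = n := by
  simp [trace, kmsMatrix]

theorem kmsTridiag_isSymm : (kmsTridiag n α).IsSymm := by
  refine IsSymm.ext fun r s => ?_
  simp only [kmsTridiag, of_apply]
  by_cases hrs : r = s
  · subst hrs
    rfl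
  · have hlow : ((r : ℤ) = s - 1) ↔ ((s : ℤ) = r + 1) := by omega
    have hhigh : ((r : ℤ) = s + 1) ↔ ((s : ℤ) = r - 1) := by omega
    rw [if_neg hrs, if_neg (Ne.symm hrs), add_comm, if_congr hlow rfl rfl,
      if_congr hhigh rfl rfl]

theorem kmsTridiag_apply_nonpos [PartialOrder R] [IsOrderedRing R] (hα : 0 ≤ α) {r s : Fin n}
    (hrs : r ≠ s) : kmsTridiag n α r s ≤ 0 := by
  rw [kmsTridiag, of_apply, if_neg (Ne.symm hrs), zero_sub, neg_nonpos]
  apply mul_nonneg hα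
  split_ifs <;> norm_num

/-- The boundary terms vanish when `g (-1) = α g 0`, resp. `g n = α g (n - 1)`. -/
theorem kmsTridiag_mulVec_apply (g : ℤ → R) (r : Fin n) :
    (kmsTridiag n α *ᵥ fun s => g s) r =
      (1 + α ^ 2) * g r - α * (g (r - 1) + g (r + 1))
        + (if (r : ℕ) = 0 then α * (g (r - 1) - α * g r) else 0)
        + (if (r : ℕ) + 1 = n then α * (g (r + 1) - α * g r) else 0) := by
  simp only [mulVec, dotProduct, kmsTridiag, of_apply, sub_mul, add_mul, mul_assoc, ite_mul,
    one_mul, zero_mul, sum_sub_distrib, sum_add_distrib, ← mul_sum, sum_ite_eq',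
    mem_univ, if_true, Fin.sum_ite_intCast_eq]
  have := r.isLt
  split_ifs <;> first | omega | ring

theorem kmsTridiag_mul_kmsMatrix : kmsTridiag n α * kmsMatrix n α = (1 - α ^ 2) • 1 := by
  ext r s
  have h := kmsTridiag_mulVec_apply n α (fun k => α ^ (k - s).natAbs) r
  rw [show (r : ℤ) - 1 - s = (r - s) - 1 by ring, show (r : ℤ) + 1 - s = (r - s) + 1 by ring,
    pow_natAbs_stencil] at h
  have hlow : (if (r : ℕ) = 0 then
      α * (α ^ ((r : ℤ) - s - 1).natAbs - α * α ^ ((r : ℤ) - s).natAbs) else 0) = 0 := by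
    split_ifs with hr
    · rw [pow_natAbs_sub_one α (by omega), sub_self, mul_zero]
    · rfl
  have hhigh : (if (r : ℕ) + 1 = n then
      α * (α ^ ((r : ℤ) - s + 1).natAbs - α * α ^ ((r : ℤ) - s).natAbs) else 0) = 0 := by
    split_ifs with hr
    · rw [pow_natAbs_add_one α (by omega), sub_self, mul_zero]
    · rfl
  change (kmsTridiag n α *ᵥ fun k : Fin n => α ^ ((k : ℤ) - s).natAbs) r = _
  rw [h, hlow, hhigh, add_zero, add_zero, Matrix.smul_apply, one_apply, smul_eq_mul, mul_ite,
    mul_one, mul_zero]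
  exact if_congr (by rw [sub_eq_zero, Int.natCast_inj, Fin.val_inj]) rfl rfl

end KMS

section KMSReal

open Real

variable (n : ℕ) (α : ℝ)

noncomputable def kmsWeight (k : ℤ) : ℝ := cos (arccos α * (2 * k - n + 1) / (n + 1))

theorem kmsWeight_stencil (k : ℤ) :
    (1 + α ^ 2) * kmsWeight n α k - α * (kmsWeight n α (k - 1) + kmsWeight n α (k + 1)) =
      (1 - 2 * α * cos (2 / ((n : ℝ) + 1) * arccos α) + α ^ 2) * kmsWeight n α k := by
  set x := arccos α * (2 * k - n + 1) / (n + 1)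
  set θ := 2 / ((n : ℝ) + 1) * arccos α
  have hsub : kmsWeight n α (k - 1) = cos (x - θ) := by
    rw [kmsWeight]
    congr 1
    push_cast
    ring
  have hadd : kmsWeight n α (k + 1) = cos (x + θ) := by
    rw [kmsWeight]
    congr 1
    push_cast
    ring
  rw [hsub, hadd, cos_sub, cos_add, kmsWeight]
  ring

theorem kmsWeight_neg_one (h₀ : -1 ≤ α) (h₁ : α ≤ 1) : kmsWeight n α (-1) = α := by
  have : (n : ℝ) + 1 ≠ 0 := by positivity
  rw [kmsWeight, show arccos α * (2 * ((-1 : ℤ) : ℝ) - n + 1) / (n + 1) = -arccos α by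
    field_simp; push_cast; ring, cos_neg, cos_arccos h₀ h₁]

theorem kmsWeight_natCast (h₀ : -1 ≤ α) (h₁ : α ≤ 1) : kmsWeight n α n = α := by
  have : (n : ℝ) + 1 ≠ 0 := by positivity
  rw [kmsWeight, show arccos α * (2 * ((n : ℤ) : ℝ) - n + 1) / (n + 1) = arccos α by
    field_simp; push_cast; ring, cos_arccos h₀ h₁]

theorem kmsWeight_pos (h₀ : 0 ≤ α) (h₁ : α < 1) {k : ℤ} (hk₀ : 0 ≤ k) (hk₁ : k < n) :
    0 < kmsWeight n α k := by
  have hφ : 0 < arccos α := arccos_pos.2 h₁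
  have hφ' : arccos α ≤ π / 2 := arccos_le_pi_div_two.2 h₀
  have hk : |(2 * k - n + 1 : ℝ)| < n + 1 := by
    have : (k : ℝ) + 1 ≤ n := by exact_mod_cast hk₁
    have : (0 : ℝ) ≤ k := by exact_mod_cast hk₀
    rw [abs_lt]
    constructor <;> linarith
  apply cos_pos_of_mem_Ioo
  rw [Set.mem_Ioo, ← abs_lt, abs_div, abs_mul, abs_of_pos hφ,
    abs_of_pos (by positivity : (0 : ℝ) < n + 1), div_lt_iff₀ (by positivity)]
  calc arccos α * |2 * (k : ℝ) - n + 1| < arccos α * (n + 1) := by gcongr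
    _ ≤ π / 2 * (n + 1) := by gcongr

theorem mul_kmsWeight_le_kmsTridiag_mulVec (h₀ : 0 ≤ α) (h₁ : α < 1) (r : Fin n) :
    (1 - 2 * α * cos (2 / ((n : ℝ) + 1) * arccos α) + α ^ 2) * kmsWeight n α r ≤
      (kmsTridiag n α *ᵥ fun s => kmsWeight n α s) r := by
  have hw : kmsWeight n α r ≤ 1 := cos_le_one _
  have hlow : 0 ≤ if (r : ℕ) = 0 then
      α * (kmsWeight n α (r - 1) - α * kmsWeight n α r) else 0 := by
    split_ifs with hr
    · rw [show (r : ℤ) - 1 = -1 by omega, kmsWeight_neg_one n α (by linarith) h₁.le]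
      nlinarith [mul_nonneg (sq_nonneg α) (sub_nonneg.2 hw)]
    · rfl
  have hhigh : 0 ≤ if (r : ℕ) + 1 = n then
      α * (kmsWeight n α (r + 1) - α * kmsWeight n α r) else 0 := by
    split_ifs with hr
    · rw [show (r : ℤ) + 1 = n by omega, kmsWeight_natCast n α (by linarith) h₁.le]
      nlinarith [mul_nonneg (sq_nonneg α) (sub_nonneg.2 hw)]
    · rfl
  rw [kmsTridiag_mulVec_apply, kmsWeight_stencil]
  linarith

theorem kmsMatrix_exists_eigenvector_one_le (hn : 0 < n) :
    ∃ μ : ℝ, ∃ v : Fin n → ℝ, v ≠ 0 ∧ kmsMatrix n α *ᵥ v = μ • v ∧ 1 ≤ μ := by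
  have : Nonempty (Fin n) := ⟨⟨0, hn⟩⟩
  obtain ⟨μ, v, hv, hKv, htr⟩ :=
    (isHermitian_iff_isSymm.2 (kmsMatrix_isSymm n α)).exists_eigenvector_trace_le_card_mul
  rw [kmsMatrix_trace, Fintype.card_fin] at htr
  exact ⟨μ, v, hv, hKv, le_of_mul_le_mul_left (by simpa using htr) (by exact_mod_cast hn)⟩

theorem kmsMatrix_eigenvalue_le (h₀ : 0 ≤ α) (h₁ : α < 1) {lam : ℝ} (hlam : 0 < lam)
    {v : Fin n → ℝ} (hv : v ≠ 0) (hKv : kmsMatrix n α *ᵥ v = lam • v) :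
    lam ≤ (1 - α ^ 2) / (1 - 2 * α * cos (2 / ((n : ℝ) + 1) * arccos α) + α ^ 2) := by
  have hTv : kmsTridiag n α *ᵥ v = ((1 - α ^ 2) / lam) • v := by
    rw [div_eq_mul_inv, mul_comm, mul_smul, eq_inv_smul_iff₀ hlam.ne', ← mulVec_smul,
      ← hKv, mulVec_mulVec, kmsTridiag_mul_kmsMatrix, smul_mulVec, one_mulVec]
  have hquad := mul_dotProduct_self_le_dotProduct_mulVec (kmsTridiag_isSymm n α)
    (fun _ _ => kmsTridiag_apply_nonpos n α h₀)
    (fun i => kmsWeight_pos n α h₀ h₁ (Int.natCast_nonneg i) (by exact_mod_cast i.isLt))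
    (mul_kmsWeight_le_kmsTridiag_mulVec n α h₀ h₁) v
  rw [hTv, dotProduct_smul, smul_eq_mul] at hquad
  have hv2 : 0 < v ⬝ᵥ v := lt_of_le_of_ne (sum_nonneg fun i _ => mul_self_nonneg (v i))
    (Ne.symm (dotProduct_self_eq_zero.not.2 hv))
  have hd : 0 < 1 - 2 * α * cos (2 / ((n : ℝ) + 1) * arccos α) + α ^ 2 := by
    nlinarith [mul_nonneg h₀ (sub_nonneg.2 (cos_le_one (2 / ((n : ℝ) + 1) * arccos α)))]
  rw [le_div_iff₀' hd, ← le_div_iff₀ hlam]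
  exact le_of_mul_le_mul_right hquad hv2

end KMSReal

theorem kms_largest_eigenvalue_bounds_general (n : ℕ) (α : ℝ)
    (hα0 : 0 ≤ α) (hα1 : α < 1) (lam : ℝ)
    (hlam : IsGreatest {μ : ℝ | ∃ v : Fin n → ℝ, v ≠ 0 ∧
      (Matrix.of fun r s : Fin n => α ^ ((r : ℤ) - (s : ℤ)).natAbs).mulVec v = μ • v} lam) :
    1 ≤ lam ∧
      lam ≤ (1 - α ^ 2) /
        (1 - 2 * α * Real.cos ((2 / ((n : ℝ) + 1)) * Real.arccos α) + α ^ 2) := by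
  obtain ⟨⟨v, hv, hKv⟩, hmax⟩ := hlam
  obtain ⟨i, -⟩ := Function.ne_iff.1 hv
  have hlam1 : 1 ≤ lam := by
    obtain ⟨μ, u, hu, hKu, hμ⟩ := kmsMatrix_exists_eigenvector_one_le n α i.pos
    exact hμ.trans (hmax ⟨u, hu, hKu⟩ : μ ≤ lam)
  exact ⟨hlam1, kmsMatrix_eigenvalue_le n α hα0 hα1 (by linarith) hv hKv⟩

/-- Bounds on the largest eigenvalue of the Kac–Murdock–Szegő matrix
`K_n(α) = (α^{|r−s|})_{r,s}` for `n ≥ 2` and `0 ≤ α < 1`: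
`1 ≤ λ₁ ≤ (1 − α²)/(1 − 2α cos((2/(n+1)) arccos α) + α²)`. -/
theorem kms_largest_eigenvalue_bounds (n : ℕ) (hn : 2 ≤ n) (α : ℝ)
    (hα0 : 0 ≤ α) (hα1 : α < 1) (lam : ℝ)
    (hlam : IsGreatest {μ : ℝ | ∃ v : Fin n → ℝ, v ≠ 0 ∧
      (Matrix.of fun r s : Fin n => α ^ ((r : ℤ) - (s : ℤ)).natAbs).mulVec v = μ • v} lam) :
    1 ≤ lam ∧
      lam ≤ (1 - α ^ 2) /
        (1 - 2 * α * Real.cos ((2 / ((n : ℝ) + 1)) * Real.arccos α) + α ^ 2) :=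
  kms_largest_eigenvalue_bounds_general n α hα0 hα1 lam hlam
end

section
/- Let n ≥ 2 and 0 ≤ α < 1. Then the numerical radius of J_n(α) equals the numerical radius of its real part: w(J_n(α)) = w( (J_n(α) + J_n(α)^*)/2 ). -/
/-- The numerical radius of an `n × n` complex matrix `A`:
`w(A) = sup { |⟨Ax, x⟩| : ‖x‖ = 1 }` (standard Hermitian inner product on `ℂⁿ`). -/
noncomputable def numRadius {n : ℕ} (A : Matrix (Fin n) (Fin n) ℂ) : ℝ :=
  sSup { r : ℝ | ∃ x : EuclideanSpace ℂ (Fin n), ‖x‖ = 1 ∧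
    r = ‖(inner ℂ x (Matrix.toEuclideanLin A x) : ℂ)‖ }

/-- The strictly upper triangular KMS-type matrix `J_n(α)` with `(r,s)` entry
`α^{s−r}` for `s > r` and `0` otherwise. -/
noncomputable def Jmat (n : ℕ) (α : ℝ) : Matrix (Fin n) (Fin n) ℂ :=
  Matrix.of fun r s : Fin n => if r < s then ((α : ℂ) ^ ((s : ℕ) - (r : ℕ))) else 0

/-!
For every matrix `A`, `⟨Re A x, x⟩ = Re ⟨Ax, x⟩`, so `w(Re A) ≤ w(A)`. If the entries of `A`
are nonnegative, the triangle inequality gives `|⟨Ax, x⟩| ≤ ⟨A|x|, |x|⟩`, where `|x|` is the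
vector of moduli of the coordinates of `x`; the right side is real, hence equal to
`⟨Re A |x|, |x|⟩`, and `‖|x|‖ = ‖x‖`, so `w(A) ≤ w(Re A)`.
-/

open ComplexConjugate ComplexOrder

noncomputable def EuclideanSpace.absVec {n : ℕ} (x : EuclideanSpace ℂ (Fin n)) :
    EuclideanSpace ℂ (Fin n) :=
  WithLp.toLp 2 fun i => (‖x i‖ : ℂ)

lemma EuclideanSpace.norm_absVec {n : ℕ} (x : EuclideanSpace ℂ (Fin n)) : ‖x.absVec‖ = ‖x‖ := by
  simp [EuclideanSpace.norm_eq, EuclideanSpace.absVec]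

section NumericalRadius

variable {n : ℕ} (A : Matrix (Fin n) (Fin n) ℂ)

lemma norm_inner_toEuclideanLin_le_numRadius {x : EuclideanSpace ℂ (Fin n)} (hx : ‖x‖ = 1) :
    ‖inner ℂ x (A.toEuclideanLin x)‖ ≤ numRadius A := by
  let T : EuclideanSpace ℂ (Fin n) →L[ℂ] EuclideanSpace ℂ (Fin n) := Matrix.toEuclideanCLM (𝕜 := ℂ) A
  refine le_csSup ⟨‖T‖, ?_⟩ ⟨x, hx, rfl⟩
  rintro _ ⟨y, hy, rfl⟩
  calc ‖inner ℂ y (A.toEuclideanLin y)‖ ≤ ‖y‖ * ‖T y‖ := norm_inner_le_norm _ _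
    _ ≤ ‖y‖ * (‖T‖ * ‖y‖) := by gcongr; exact T.le_opNorm y
    _ = ‖T‖ := by rw [hy]; ring

lemma numRadius_le {c : ℝ} (hc : 0 ≤ c)
    (h : ∀ x : EuclideanSpace ℂ (Fin n), ‖x‖ = 1 → ‖inner ℂ x (A.toEuclideanLin x)‖ ≤ c) :
    numRadius A ≤ c := by
  refine Real.sSup_le ?_ hc
  rintro _ ⟨x, hx, rfl⟩
  exact h x hx

lemma numRadius_nonneg : 0 ≤ numRadius A :=
  Real.sSup_nonneg <| by rintro _ ⟨x, -, rfl⟩; exact norm_nonneg _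

lemma inner_toEuclideanLin_realPart (x : EuclideanSpace ℂ (Fin n)) :
    inner ℂ x (((1 / 2 : ℂ) • (A + A.conjTranspose)).toEuclideanLin x)
      = ((inner ℂ x (A.toEuclideanLin x)).re : ℂ) := by
  rw [map_smul, map_add, Matrix.toEuclideanLin_conjTranspose_eq_adjoint, LinearMap.smul_apply,
    LinearMap.add_apply, inner_smul_right, inner_add_right, LinearMap.adjoint_inner_right,
    ← inner_conj_symm (A.toEuclideanLin x) x, Complex.add_conj]
  push_cast
  ring

lemma numRadius_realPart_le : numRadius ((1 / 2 : ℂ) • (A + A.conjTranspose)) ≤ numRadius A :=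
  numRadius_le _ (numRadius_nonneg A) fun x hx => by
    rw [inner_toEuclideanLin_realPart, Complex.norm_real, Real.norm_eq_abs]
    exact (Complex.abs_re_le_norm _).trans (norm_inner_toEuclideanLin_le_numRadius A hx)

lemma inner_toEuclideanLin_eq_sum (x : EuclideanSpace ℂ (Fin n)) :
    inner ℂ x (A.toEuclideanLin x) = ∑ i, ∑ j, conj (x i) * A i j * x j := by
  simp only [Matrix.toLpLin_apply, EuclideanSpace.inner_eq_star_dotProduct, dotProduct,
    Matrix.mulVec, Finset.sum_mul]
  exact Finset.sum_congr rfl fun i _ => Finset.sum_congr rfl fun j _ => by simp; ring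

variable {A}

lemma norm_inner_toEuclideanLin_le_re_absVec (hA : ∀ i j, 0 ≤ A i j)
    (x : EuclideanSpace ℂ (Fin n)) :
    ‖inner ℂ x (A.toEuclideanLin x)‖ ≤ (inner ℂ x.absVec (A.toEuclideanLin x.absVec)).re := by
  have hterm : ∀ i j, conj (x.absVec i) * A i j * x.absVec j
      = ((‖conj (x i) * A i j * x j‖ : ℝ) : ℂ) := fun i j => by
    simp [EuclideanSpace.absVec, Complex.norm_of_nonneg' (hA i j)]
  simp_rw [inner_toEuclideanLin_eq_sum, hterm, ← Complex.ofReal_sum, Complex.ofReal_re]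
  exact (norm_sum_le _ _).trans (Finset.sum_le_sum fun i _ => norm_sum_le _ _)

lemma numRadius_le_numRadius_realPart_of_nonneg (hA : ∀ i j, 0 ≤ A i j) :
    numRadius A ≤ numRadius ((1 / 2 : ℂ) • (A + A.conjTranspose)) :=
  numRadius_le _ (numRadius_nonneg _) fun x hx => by
    have habs : ‖x.absVec‖ = 1 := x.norm_absVec.trans hx
    refine (norm_inner_toEuclideanLin_le_re_absVec hA x).trans ?_
    refine le_trans ?_ (norm_inner_toEuclideanLin_le_numRadius _ habs)
    rw [inner_toEuclideanLin_realPart, Complex.norm_real, Real.norm_eq_abs]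
    exact le_abs_self _

theorem numRadius_eq_numRadius_realPart_of_nonneg (hA : ∀ i j, 0 ≤ A i j) :
    numRadius A = numRadius ((1 / 2 : ℂ) • (A + A.conjTranspose)) :=
  (numRadius_le_numRadius_realPart_of_nonneg hA).antisymm (numRadius_realPart_le A)

end NumericalRadius

lemma Jmat_nonneg (n : ℕ) {α : ℝ} (hα : 0 ≤ α) (i j : Fin n) : 0 ≤ Jmat n α i j := by
  simp only [Jmat, Matrix.of_apply]
  split_ifs
  · exact_mod_cast pow_nonneg hα _
  · rfl

theorem numRadius_Jmat_eq_numRadius_re_general (n : ℕ) (α : ℝ)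
    (hα0 : 0 ≤ α) :
    numRadius (Jmat n α)
      = numRadius ((1 / 2 : ℂ) • (Jmat n α + (Jmat n α).conjTranspose)) :=
  numRadius_eq_numRadius_realPart_of_nonneg (Jmat_nonneg n hα0)

/-- For `n ≥ 2` and `0 ≤ α < 1`, the numerical radius of `J_n(α)` coincides with
the numerical radius of its real part `(J_n(α) + J_n(α)^*)/2`. -/
theorem numRadius_Jmat_eq_numRadius_re (n : ℕ) (hn : 2 ≤ n) (α : ℝ)
    (hα0 : 0 ≤ α) (hα1 : α < 1) :
    numRadius (Jmat n α)
      = numRadius ((1 / 2 : ℂ) • (Jmat n α + (Jmat n α).conjTranspose)) :=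
  numRadius_Jmat_eq_numRadius_re_general n α hα0
end

section
/- For 0 ≤ α < 1, the numerical radius of the 3×3 matrix J_3(α) = [[0, α, α²],[0, 0, α],[0, 0, 0]] equals α(√(α²+8) − 3α) / (4 + 2α² − 2α√(α²+8)). -/
/-!
For `x ∈ ℂ³` the triangle inequality bounds `|⟪x, J₃(α) x⟫|` by the real quadratic form
`α (a b + b c) + α² a c` in the moduli `a, b, c` of the coordinates of `x`. If `t > 0` solves
`2 t² = α t + 1`, then `(t, 1, t)` is an eigenvector of this form with eigenvalue `α t`, and `α t` is its
largest eigenvalue. Hence `w(J₃(α)) = α t = α (α + √(α² + 8)) / 4`, attained at `(t, 1, t)`, and for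
`α < 1` this is the paper's expression.
-/

open scoped InnerProductSpace ComplexConjugate

theorem numRadius_eq_of_le_of_eq {n : ℕ} {A : Matrix (Fin n) (Fin n) ℂ} {w : ℝ}
    (hle : ∀ x, ‖⟪x, A.toEuclideanLin x⟫_ℂ‖ ≤ w * ‖x‖ ^ 2)
    {u : EuclideanSpace ℂ (Fin n)} (hu : u ≠ 0)
    (hu_eq : ‖⟪u, A.toEuclideanLin u⟫_ℂ‖ = w * ‖u‖ ^ 2) :
    numRadius A = w := by
  refine IsGreatest.csSup_eq ⟨⟨(‖u‖⁻¹ : ℂ) • u, norm_smul_inv_norm hu, ?_⟩, ?_⟩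
  · have : ‖u‖ ≠ 0 := norm_ne_zero_iff.mpr hu
    rw [map_smul, inner_smul_left, inner_smul_right, norm_mul, norm_mul, hu_eq]
    simp
    field_simp
  · rintro r ⟨x, hx, rfl⟩
    simpa [hx] using hle x

noncomputable def J3Root (α : ℝ) : ℝ := (α + √(α ^ 2 + 8)) / 4

lemma J3Root_pos (α : ℝ) : 0 < J3Root α := by
  have : |α| < √(α ^ 2 + 8) := by
    rw [← Real.sqrt_sq_eq_abs]
    exact Real.sqrt_lt_sqrt (sq_nonneg α) (by linarith)
  unfold J3Root
  linarith [neg_abs_le α]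

lemma two_mul_J3Root_sq (α : ℝ) : 2 * J3Root α ^ 2 = α * J3Root α + 1 := by
  have := Real.sq_sqrt (show 0 ≤ α ^ 2 + 8 by positivity)
  unfold J3Root
  linear_combination this / 8

lemma div_eq_mul_J3Root {α : ℝ} (hα0 : 0 ≤ α) (hα1 : α < 1) :
    α * (√(α ^ 2 + 8) - 3 * α) / (4 + 2 * α ^ 2 - 2 * α * √(α ^ 2 + 8)) = α * J3Root α := by
  have hs := Real.sq_sqrt (show 0 ≤ α ^ 2 + 8 by positivity)
  have hden : 0 < 4 + 2 * α ^ 2 - 2 * α * √(α ^ 2 + 8) := by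
    nlinarith [mul_nonneg hα0 (Real.sqrt_nonneg (α ^ 2 + 8))]
  rw [div_eq_iff hden.ne', J3Root]
  linear_combination α ^ 2 / 2 * hs

def J3Form (α a b c : ℝ) : ℝ := α * (a * b + b * c) + α ^ 2 * (a * c)

lemma J3Form_le {α t : ℝ} (hα : 0 ≤ α) (ht : 0 < t) (hroot : 2 * t ^ 2 = α * t + 1)
    (a b c : ℝ) : J3Form α a b c ≤ α * t * (a ^ 2 + b ^ 2 + c ^ 2) := by
  -- In the coordinates `a + c`, `a - c`, `b`, using `1 / t = 2 t - α`.
  have key : 4 * t * (t * (a ^ 2 + b ^ 2 + c ^ 2) - (a * b + b * c) - α * (a * c))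
      = (a + c - 2 * t * b) ^ 2 + t * (2 * t + α) * (a - c) ^ 2 := by
    linear_combination (2 * (a ^ 2 + c ^ 2) - (a - c) ^ 2) * hroot
  have hF : 0 ≤ t * (a ^ 2 + b ^ 2 + c ^ 2) - (a * b + b * c) - α * (a * c) := by
    refine nonneg_of_mul_nonneg_right (a := 4 * t) ?_ (by positivity)
    rw [key]
    positivity
  unfold J3Form
  linear_combination α * hF

lemma J3Form_eigvec {α t : ℝ} (hroot : 2 * t ^ 2 = α * t + 1) :
    J3Form α t 1 t = α * t * (t ^ 2 + 1 ^ 2 + t ^ 2) := by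
  unfold J3Form
  linear_combination (-α * t) * hroot

def J3 (α : ℝ) : Matrix (Fin 3) (Fin 3) ℂ := !![0, (α : ℂ), (α : ℂ) ^ 2; 0, 0, (α : ℂ); 0, 0, 0]

lemma inner_J3 (α : ℝ) (x : EuclideanSpace ℂ (Fin 3)) :
    ⟪x, (J3 α).toEuclideanLin x⟫_ℂ
      = α * (conj (x 0) * x 1 + conj (x 1) * x 2) + α ^ 2 * (conj (x 0) * x 2) := by
  simp [J3, Matrix.toLpLin_apply, PiLp.inner_apply, Fin.sum_univ_three, dotProduct]
  ring

lemma norm_inner_J3_le {α : ℝ} (hα : 0 ≤ α) (x : EuclideanSpace ℂ (Fin 3)) :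
    ‖⟪x, (J3 α).toEuclideanLin x⟫_ℂ‖ ≤ J3Form α ‖x 0‖ ‖x 1‖ ‖x 2‖ := by
  rw [inner_J3, J3Form]
  calc _ ≤ ‖(α : ℂ) * (conj (x 0) * x 1 + conj (x 1) * x 2)‖
          + ‖(α : ℂ) ^ 2 * (conj (x 0) * x 2)‖ := norm_add_le _ _
    _ ≤ _ := by
      simp only [norm_mul, norm_pow, Complex.norm_real, Real.norm_of_nonneg hα, RCLike.norm_conj]
      gcongr
      exact (norm_add_le _ _).trans (by simp only [norm_mul, RCLike.norm_conj, le_refl])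

lemma inner_J3_ofReal (α a b c : ℝ) :
    ⟪!₂[(a : ℂ), b, c], (J3 α).toEuclideanLin !₂[(a : ℂ), b, c]⟫_ℂ = (J3Form α a b c : ℂ) := by
  rw [inner_J3, J3Form]
  simp

lemma norm_sq_toLp_ofReal (a b c : ℝ) : ‖!₂[(a : ℂ), b, c]‖ ^ 2 = a ^ 2 + b ^ 2 + c ^ 2 := by
  simp [EuclideanSpace.norm_sq_eq, Fin.sum_univ_three]

/-- For `0 ≤ α < 1`, the numerical radius of
`J_3(α) = [[0, α, α²],[0, 0, α],[0, 0, 0]]` equals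
`α(√(α²+8) − 3α)/(4 + 2α² − 2α√(α²+8))`. -/
theorem numRadius_J3 (α : ℝ) (hα0 : 0 ≤ α) (hα1 : α < 1) :
    numRadius !![0, (α : ℂ), ((α : ℂ)) ^ 2; 0, 0, (α : ℂ); 0, 0, 0]
      = α * (Real.sqrt (α ^ 2 + 8) - 3 * α)
          / (4 + 2 * α ^ 2 - 2 * α * Real.sqrt (α ^ 2 + 8)) := by
  have ht := J3Root_pos α
  have hroot := two_mul_J3Root_sq α
  rw [div_eq_mul_J3Root hα0 hα1]
  refine numRadius_eq_of_le_of_eq (A := J3 α) (fun x => ?_)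
    (u := !₂[(J3Root α : ℂ), (1 : ℝ), (J3Root α : ℂ)]) (fun h => ?_) ?_
  · rw [EuclideanSpace.norm_sq_eq, Fin.sum_univ_three]
    exact (norm_inner_J3_le hα0 x).trans (J3Form_le hα0 ht hroot _ _ _)
  · simpa using congrArg (fun v : EuclideanSpace ℂ (Fin 3) => v 1) h
  · rw [inner_J3_ofReal, J3Form_eigvec hroot, Complex.norm_real, norm_sq_toLp_ofReal,
      Real.norm_of_nonneg (by positivity)]
end

section
/- Let n ≥ 2 and let α ∈ ℂ with |α| < 1. Then the numerical radius of T_n(α) depends only on |α|: w(T_n(α)) = w(T_n(|α|)). -/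
/-- The matrix `T_n(α)` of the compressed adjoint shift `S*(φ)` for
`φ(z) = ((z−α)/(1−ᾱz))ⁿ`: its `(l,k)` entry is `ᾱ` if `l = k`,
`(1 − |α|²)(−α)^{k−l−1}` if `k > l`, and `0` otherwise. -/
noncomputable def Tmat (n : ℕ) (α : ℂ) : Matrix (Fin n) (Fin n) ℂ :=
  Matrix.of fun l k : Fin n =>
    if l = k then (starRingEnd ℂ) α
    else if l < k then ((1 - ‖α‖ ^ 2 : ℝ) : ℂ) * (-α) ^ ((k : ℕ) - (l : ℕ) - 1)
    else 0

/-! Write `α = r u` with `r = ‖α‖` and `‖u‖ = 1`. Then `T_n(α) = ū • D⋆ T_n(r) D` for the diagonal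
unitary `D = diag(1, u, …, u^{n-1})`: conjugation by `D` multiplies the `(l,k)` entry by
`u^{k-l}`, and together with the factor `ū` this is exactly the phase `u^{k-l-1}` of
`(-α)^{k-l-1}` (and turns `r` into `ᾱ` on the diagonal). Unitary similarity preserves the numerical
range and a unimodular scalar only rotates it, so the numerical radius is unchanged. -/

open ComplexConjugate Matrix
open scoped Pointwise

section NumericalRange

variable {𝕜 H : Type*} [RCLike 𝕜] [NormedAddCommGroup H] [InnerProductSpace 𝕜 H]

def numRange (T : H →L[𝕜] H) : Set 𝕜 :=
  {z | ∃ x : H, ‖x‖ = 1 ∧ inner 𝕜 x (T x) = z}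

theorem numRange_smul (c : 𝕜) (T : H →L[𝕜] H) : numRange (c • T) = c • numRange T := by
  ext z
  constructor
  · rintro ⟨x, hx, rfl⟩
    exact ⟨_, ⟨x, hx, rfl⟩, (inner_smul_right _ _ _).symm⟩
  · rintro ⟨_, ⟨x, hx, rfl⟩, rfl⟩
    exact ⟨x, hx, inner_smul_right _ _ _⟩

theorem numRange_star_mul_mul_of_mem_unitary [CompleteSpace H] (T : H →L[𝕜] H)
    {V : H →L[𝕜] H} (hV : V ∈ unitary (H →L[𝕜] H)) : numRange (star V * T * V) = numRange T := by
  have inner_conj (x : H) : inner 𝕜 x ((star V * T * V) x) = inner 𝕜 (V x) (T (V x)) := by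
    rw [ContinuousLinearMap.star_eq_adjoint]
    exact ContinuousLinearMap.adjoint_inner_right V x (T (V x))
  have hV_star (y : H) : V (star V y) = y := congr($(Unitary.mul_star_self_of_mem hV) y)
  ext z
  constructor
  · rintro ⟨x, hx, rfl⟩
    exact ⟨V x, by rw [V.norm_map_of_mem_unitary hV, hx], (inner_conj x).symm⟩
  · rintro ⟨y, hy, rfl⟩
    refine ⟨star V y, ?_, by rw [inner_conj, hV_star]⟩
    rw [← V.norm_map_of_mem_unitary hV, hV_star, hy]

end NumericalRange

section NumericalRadius

variable {n : ℕ}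

theorem numRadius_eq_sSup_norm_numRange (A : Matrix (Fin n) (Fin n) ℂ) :
    numRadius A = sSup (norm '' numRange (toEuclideanCLM (n := Fin n) (𝕜 := ℂ) A)) := by
  unfold numRadius numRange
  congr 1
  ext r
  constructor
  · rintro ⟨x, hx, rfl⟩
    exact ⟨_, ⟨x, hx, rfl⟩, rfl⟩
  · rintro ⟨_, ⟨x, hx, rfl⟩, rfl⟩
    exact ⟨x, hx, rfl⟩

theorem numRadius_smul_of_norm_eq_one (A : Matrix (Fin n) (Fin n) ℂ) {c : ℂ} (hc : ‖c‖ = 1) :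
    numRadius (c • A) = numRadius A := by
  rw [numRadius_eq_sSup_norm_numRange, numRadius_eq_sSup_norm_numRange, map_smul, numRange_smul,
    ← Set.image_smul, Set.image_image]
  simp only [norm_smul, hc, one_mul]

theorem numRadius_star_mul_mul_of_mem_unitary (A : Matrix (Fin n) (Fin n) ℂ)
    {U : Matrix (Fin n) (Fin n) ℂ} (hU : U ∈ unitary (Matrix (Fin n) (Fin n) ℂ)) :
    numRadius (star U * A * U) = numRadius A := by
  rw [numRadius_eq_sSup_norm_numRange, numRadius_eq_sSup_norm_numRange, map_mul, map_mul,
    map_star, numRange_star_mul_mul_of_mem_unitary _ (Unitary.map_mem _ hU)]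

end NumericalRadius

theorem diagonal_mem_unitary {m R : Type*} [Fintype m] [DecidableEq m] [Semiring R] [StarRing R]
    {d : m → R} (hd : ∀ i, d i ∈ unitary R) : diagonal d ∈ unitary (Matrix m m R) := by
  rw [Unitary.mem_iff, star_eq_conjTranspose, diagonal_conjTranspose, diagonal_mul_diagonal,
    diagonal_mul_diagonal, ← diagonal_one]
  exact ⟨congrArg diagonal (funext fun i => Unitary.star_mul_self_of_mem (hd i)),
    congrArg diagonal (funext fun i => Unitary.mul_star_self_of_mem (hd i))⟩

theorem Tmat_ofReal_mul {n : ℕ} (r : ℝ) {u : ℂ} (hu : u ∈ unitary ℂ) :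
    Tmat n (r * u) = conj u • (star (diagonal fun j : Fin n => u ^ (j : ℕ)) * Tmat n r *
      diagonal fun j : Fin n => u ^ (j : ℕ)) := by
  have hu1 : conj u * u = 1 := Unitary.star_mul_self_of_mem hu
  have hpow (k : ℕ) : conj (u ^ k) * u ^ k = 1 := Unitary.star_mul_self_of_mem (pow_mem hu k)
  have hnorm : ‖(r : ℂ) * u‖ = ‖(r : ℂ)‖ := by
    rw [norm_mul, CStarRing.norm_of_mem_unitary hu, mul_one]
  ext i j
  rw [Matrix.smul_apply, mul_diagonal, star_eq_conjTranspose, diagonal_conjTranspose, diagonal_mul]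
  simp only [Tmat, Pi.star_apply, Complex.star_def, of_apply, hnorm, smul_eq_mul]
  rcases lt_trichotomy i j with hij | rfl | hij
  · obtain ⟨m, hm⟩ : ∃ m, (j : ℕ) = i + 1 + m := ⟨j - i - 1, by omega⟩
    have hsub : (j : ℕ) - i - 1 = m := by omega
    rw [if_neg hij.ne, if_pos hij, if_neg hij.ne, if_pos hij, hsub, hm, ← neg_mul, mul_pow,
      pow_add, pow_succ]
    push_cast
    linear_combination
      -((1 - (‖(r : ℂ)‖ : ℂ) ^ 2) * (-(r : ℂ)) ^ m * u ^ m) * (conj u * u * hpow i + hu1)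
  · simp only [if_true, map_mul, Complex.conj_ofReal]
    linear_combination -(r : ℂ) * conj u * hpow i
  · rw [if_neg hij.ne', if_neg hij.not_gt, if_neg hij.ne', if_neg hij.not_gt, mul_zero, zero_mul,
      mul_zero]

theorem numRadius_Tmat_abs_general (n : ℕ) (α : ℂ) :
    numRadius (Tmat n α) = numRadius (Tmat n ((‖α‖ : ℝ) : ℂ)) := by
  set u := Complex.exp (α.arg * Complex.I)
  have hu : u ∈ unitary ℂ := Unitary.mem_iff_star_mul_self.mpr <| by
    rw [Complex.star_def, Complex.conj_mul', Complex.norm_exp_ofReal_mul_I, Complex.ofReal_one,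
      one_pow]
  have hu_conj : ‖conj u‖ = 1 := by rw [Complex.norm_conj, CStarRing.norm_of_mem_unitary hu]
  calc numRadius (Tmat n α) = numRadius (Tmat n (‖α‖ * u)) := by
        rw [Complex.norm_mul_exp_arg_mul_I]
    _ = numRadius (Tmat n ((‖α‖ : ℝ) : ℂ)) := by
        rw [Tmat_ofReal_mul _ hu, numRadius_smul_of_norm_eq_one _ hu_conj,
          numRadius_star_mul_mul_of_mem_unitary _ (diagonal_mem_unitary fun j => pow_mem hu _)]

/-- For `n ≥ 2` and `|α| < 1`, the numerical radius of `T_n(α)` depends only on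
`|α|`: one has `w(T_n(α)) = w(T_n(|α|))`. -/
theorem numRadius_Tmat_abs (n : ℕ) (hn : 2 ≤ n) (α : ℂ) (hα : ‖α‖ < 1) :
    numRadius (Tmat n α) = numRadius (Tmat n ((‖α‖ : ℝ) : ℂ)) :=
  numRadius_Tmat_abs_general n α
end

section
/- Let n ≥ 2 and let α ∈ ℂ with |α| < 1; write a = |α|, and let t₁^{(n)} and t_n^{(n)} be respectively the smallest and the largest zero in (0, π) of q_{n,a}(t) = sin((n+1)t) − 2a·sin(nt) + a²·sin((n−1)t). Set m_n(a) = max{ |(1+a²)cos t₁^{(n)} − 2a| / (1 − 2a·cos t₁^{(n)} + a²) , (−(1+a²)cos t_n^{(n)} + 2a) / (1 − 2a·cos t_n^{(n)} + a²) } and M_n(a) = max{ ((1−3a²)cos t₁^{(n)} + 2a³) / (1 − 2a·cos t₁^{(n)} + a²) , (−(1+a²)cos t_n^{(n)} + 2a) / (1 − 2a·cos t_n^{(n)} + a²) }. Then m_n(a) ≤ w(T_n(α)) ≤ M_n(a). -/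
/-!
Write `a = |α|` and `-α = a ζ` with `|ζ| = 1`. Conjugating by the diagonal unitary
`diag(ζ̄ᵏ)` turns `T_n(α)` into `ζ̄ R`, where `R = realModel n a` is the real matrix `T_n(-a)`.
Two real symmetric matrices control `R`: the symmetric part `F = symmAbs n a` of its entrywise
absolute value, and its own symmetric part, which is `F - 2a`. Hence `|⟨Tx, x⟩| ≤ ⟨F|x|, |x|⟩`,
while a real unit eigenvector `w` of `F` gives `|⟨Tx, x⟩| = |⟨Fw, w⟩ - 2a|` for `x = (ζ̄ᵏ wₖ)`.

The spectrum of `F` is explicit: for every zero `t ∈ (0, π)` of `q_{n,a}` the vector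
`vₖ = sin((k+1)t) - a sin(kt)` is an eigenvector with eigenvalue
`((1-3a²) cos t + 2a³) / (1 - 2a cos t + a²)`, increasing in `cos t`. Since
`q_{n,a}(t) = (1 - 2a cos t + a²) sin Φ(t)` for a continuous phase `Φ` running from `0` to
`(n+1)π`, `q_{n,a}` has `n` distinct zeros, so these are all the eigenvalues and the largest
one belongs to `t₁`.
-/

open Real Finset Matrix Module End ComplexConjugate

theorem Module.End.mem_range_of_hasEigenvalue {K V ι : Type*} [Field K] [AddCommGroup V]
    [Module K V] [FiniteDimensional K V] [Fintype ι] {f : End K V}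
    (hcard : Fintype.card ι = finrank K V) {μ : ι → K} (hμ : Function.Injective μ)
    {u : ι → V} (hu : ∀ i, f.HasEigenvector (μ i) (u i)) {ν : K} (hν : f.HasEigenvalue ν) :
    ν ∈ Set.range μ := by
  by_contra hνμ
  obtain ⟨v, hv⟩ := hν.exists_hasEigenvector
  have hinj : Function.Injective fun i : Option ι => i.elim ν μ := by
    rintro (_ | i) (_ | j) h
    · rfl
    · exact absurd ⟨j, h.symm⟩ hνμ
    · exact absurd ⟨i, h⟩ hνμ
    · exact congrArg some (hμ h)
  have hli := f.eigenvectors_linearIndependent' _ hinj (fun i => i.elim v u)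
    (by rintro (_ | i); exacts [hv, hu i])
  have := hli.fintype_card_le_finrank
  simp [hcard] at this

theorem LinearMap.IsSymmetric.inner_map_self_le {E : Type*} [NormedAddCommGroup E]
    [InnerProductSpace ℝ E] [FiniteDimensional ℝ E] {T : E →ₗ[ℝ] E} (hT : T.IsSymmetric)
    {M : ℝ} (hM : ∀ μ, HasEigenvalue T μ → μ ≤ M) (x : E) :
    inner ℝ (T x) x ≤ M * ‖x‖ ^ 2 := by
  let b := hT.eigenvectorBasis rfl
  have hb (i) : inner ℝ (b i) (T x) = hT.eigenvalues rfl i * inner ℝ (b i) x := by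
    rw [← hT, hT.apply_eigenvectorBasis, real_inner_smul_left]; rfl
  calc inner ℝ (T x) x = ∑ i, hT.eigenvalues rfl i * (inner ℝ x (b i) * inner ℝ (b i) x) := by
        rw [real_inner_comm, ← b.sum_inner_mul_inner]
        refine Finset.sum_congr rfl fun i _ => ?_
        rw [hb]; ring
    _ ≤ ∑ i, M * (inner ℝ x (b i) * inner ℝ (b i) x) := by
        gcongr with i
        · rw [real_inner_comm]; exact mul_self_nonneg _
        · exact hM _ (hT.hasEigenvalue_eigenvalues rfl i)
    _ = M * ‖x‖ ^ 2 := by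
        rw [← Finset.mul_sum, b.sum_inner_mul_inner, real_inner_self_eq_norm_sq]

theorem Matrix.IsHermitian.dotProduct_mulVec_le {ι : Type*} [Fintype ι] [DecidableEq ι]
    {A : Matrix ι ι ℝ} (hA : A.IsHermitian) {μ : ι → ℝ} (hμ : Function.Injective μ)
    {u : ι → ι → ℝ} (hu0 : ∀ i, u i ≠ 0) (hu : ∀ i, A *ᵥ u i = μ i • u i) {M : ℝ}
    (hM : ∀ i, μ i ≤ M) (y : ι → ℝ) : y ⬝ᵥ (A *ᵥ y) ≤ M * (y ⬝ᵥ y) := by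
  have hT := Matrix.isSymmetric_toEuclideanLin_iff.mpr hA
  have hvec (i) : HasEigenvector (toEuclideanLin A) (μ i) (WithLp.toLp 2 (u i)) :=
    ⟨mem_eigenspace_iff.mpr (congrArg (WithLp.toLp 2) (hu i)), by simpa using hu0 i⟩
  have := hT.inner_map_self_le (M := M) (fun ν hν => by
    obtain ⟨i, rfl⟩ := mem_range_of_hasEigenvalue (by simp) hμ hvec hν
    exact hM i) (WithLp.toLp 2 y)
  rwa [← real_inner_self_eq_norm_sq] at this

theorem Matrix.dotProduct_add_transpose_mulVec {R ι : Type*} [CommSemiring R] [Fintype ι]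
    (B : Matrix ι ι R) (y : ι → R) : y ⬝ᵥ ((B + Bᵀ) *ᵥ y) = 2 * (y ⬝ᵥ (B *ᵥ y)) := by
  rw [add_mulVec, dotProduct_add, mulVec_transpose, dotProduct_comm y (y ᵥ* B),
    ← dotProduct_mulVec, two_mul]

theorem Matrix.norm_inner_toEuclideanLin_le {𝕜 ι : Type*} [RCLike 𝕜] [Fintype ι]
    [DecidableEq ι] (A : Matrix ι ι 𝕜) (x : EuclideanSpace 𝕜 ι) :
    ‖inner 𝕜 x (toEuclideanLin A x)‖ ≤ (fun i => ‖x i‖) ⬝ᵥ (A.map norm *ᵥ fun i => ‖x i‖) := by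
  rw [toLpLin_apply, EuclideanSpace.inner_eq_star_dotProduct, dotProduct_comm]
  refine (norm_sum_le _ _).trans (Finset.sum_le_sum fun l _ => ?_)
  rw [norm_mul, Pi.star_apply, RCLike.star_def, RCLike.norm_conj]
  refine mul_le_mul_of_nonneg_left ((norm_sum_le _ _).trans_eq ?_) (norm_nonneg _)
  simp [norm_mul, mulVec, dotProduct]

theorem Complex.exists_norm_eq_one_neg_eq (α : ℂ) : ∃ ζ : ℂ, ‖ζ‖ = 1 ∧ -α = ‖α‖ * ζ :=
  ⟨exp ((-α).arg * I), norm_exp_ofReal_mul_I _, by rw [← norm_neg α, norm_mul_exp_arg_mul_I]⟩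

theorem le_numRadius {n : ℕ} {A : Matrix (Fin n) (Fin n) ℂ} {M : ℝ}
    (hM : ∀ x : EuclideanSpace ℂ (Fin n), ‖x‖ = 1 → ‖inner ℂ x (toEuclideanLin A x)‖ ≤ M)
    {x : EuclideanSpace ℂ (Fin n)} (hx : ‖x‖ = 1) :
    ‖inner ℂ x (toEuclideanLin A x)‖ ≤ numRadius A :=
  le_csSup ⟨M, by rintro _ ⟨y, hy, rfl⟩; exact hM y hy⟩ ⟨x, hx, rfl⟩

theorem numRadius_le_s16 {n : ℕ} {A : Matrix (Fin n) (Fin n) ℂ} {M : ℝ}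
    (hM : ∀ x : EuclideanSpace ℂ (Fin n), ‖x‖ = 1 → ‖inner ℂ x (toEuclideanLin A x)‖ ≤ M)
    (hne : ∃ x : EuclideanSpace ℂ (Fin n), ‖x‖ = 1) : numRadius A ≤ M := by
  obtain ⟨x, hx⟩ := hne
  exact csSup_le ⟨_, x, hx, rfl⟩ (by rintro _ ⟨y, hy, rfl⟩; exact hM y hy)

namespace Tmat

noncomputable section

def qFun (n : ℕ) (a t : ℝ) : ℝ :=
  sin ((n + 1) * t) - 2 * a * sin (n * t) + a ^ 2 * sin ((n - 1) * t)

def denom (a c : ℝ) : ℝ := 1 - 2 * a * c + a ^ 2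

def eigval (a c : ℝ) : ℝ := ((1 - 3 * a ^ 2) * c + 2 * a ^ 3) / denom a c

def eigvec (a t : ℝ) (k : ℕ) : ℝ := sin ((k + 1) * t) - a * sin (k * t)

def kernel (a : ℝ) (l k : ℕ) : ℝ :=
  if l = k then a else (1 - a ^ 2) / 2 * a ^ (Nat.dist l k - 1)

def symmAbs (n : ℕ) (a : ℝ) : Matrix (Fin n) (Fin n) ℝ := of fun l k => kernel a l k

def realModel (n : ℕ) (a : ℝ) : Matrix (Fin n) (Fin n) ℝ :=
  of fun l k => if l = k then -a else if l < k then (1 - a ^ 2) * a ^ ((k : ℕ) - l - 1) else 0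

/-- `q_{n,a}(t) = Im (e^{i(n-1)t} (e^{it} - a)²)` and `e^{it} - a = √(denom a (cos t)) e^{iθ}`
with `θ ∈ [0, π]` the `arccos` below, so `q_{n,a} = denom · sin (phase)`. -/
def phase (n : ℕ) (a t : ℝ) : ℝ :=
  (n - 1) * t + 2 * arccos ((cos t - a) / √(denom a (cos t)))

end

variable {n : ℕ} {a : ℝ}

theorem denom_pos (ha0 : 0 ≤ a) (ha1 : a < 1) {c : ℝ} (hc : c ≤ 1) : 0 < denom a c := by
  unfold denom; nlinarith

theorem denom_cos_eq (a t : ℝ) : denom a (cos t) = (cos t - a) ^ 2 + sin t ^ 2 := by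
  unfold denom; linear_combination (-1 : ℝ) * sin_sq_add_cos_sq t

theorem eigval_strictMonoOn (ha0 : 0 ≤ a) (ha1 : a < 1) :
    StrictMonoOn (eigval a) (Set.Iic 1) := by
  intro c hc c' hc' hlt
  have h := denom_pos ha0 ha1 hc
  have h' := denom_pos ha0 ha1 hc'
  have : 0 < (1 - a ^ 2) ^ 2 := pow_pos (by nlinarith) 2
  rw [eigval, eigval, div_lt_div_iff₀ h h']
  unfold denom
  nlinarith

theorem eigval_sub_two_mul (ha0 : 0 ≤ a) (ha1 : a < 1) {c : ℝ} (hc : c ≤ 1) :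
    eigval a c - 2 * a = ((1 + a ^ 2) * c - 2 * a) / denom a c := by
  have := (denom_pos ha0 ha1 hc).ne'
  rw [eigval, div_sub' this, denom]
  ring_nf

theorem denom_mul_eigvec (t : ℝ) (l : ℕ) :
    denom a (cos t) * eigvec a t l = qFun l a t - a * qFun (l + 1) a t := by
  unfold denom eigvec qFun
  push_cast
  have e1 : ((l : ℝ) + 1) * t = l * t + t := by ring
  have e2 : ((l : ℝ) + 1 + 1) * t = (l * t + t) + t := by ring
  have e3 : ((l : ℝ) - 1) * t = l * t - t := by ring
  have e4 : ((l : ℝ) + 1 - 1) * t = l * t := by ring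
  rw [e1, e2, e3, e4]
  simp only [sin_add, cos_add, sin_sub]
  linear_combination (-a * sin (l * t)) * sin_sq_add_cos_sq t

theorem denom_mul_sin_add_qFun (t : ℝ) (l : ℕ) :
    denom a (cos t) * sin (l * t) + qFun (l + 1) a t = 2 * (cos t - a) * eigvec a t l := by
  unfold denom eigvec qFun
  push_cast
  have e1 : ((l : ℝ) + 1) * t = l * t + t := by ring
  have e2 : ((l : ℝ) + 1 + 1) * t = (l * t + t) + t := by ring
  have e4 : ((l : ℝ) + 1 - 1) * t = l * t := by ring
  rw [e1, e2, e4]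
  simp only [sin_add, cos_add]
  linear_combination (-sin (l * t)) * sin_sq_add_cos_sq t

theorem sum_pow_mul_eigvec (t : ℝ) (l : ℕ) :
    ∑ k ∈ range l, a ^ (l - 1 - k) * eigvec a t k = sin (l * t) := by
  induction l with
  | zero => simp
  | succ l ih =>
    rw [sum_range_succ, Nat.add_sub_cancel, Nat.sub_self, pow_zero, one_mul]
    have hk : ∀ k ∈ range l,
        a ^ (l - k) * eigvec a t k = a * (a ^ (l - 1 - k) * eigvec a t k) := by
      intro k hk
      rw [← mul_assoc, ← pow_succ']
      have := mem_range.mp hk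
      congr 2
      omega
    rw [Finset.sum_congr rfl hk, ← Finset.mul_sum, ih]
    unfold eigvec
    push_cast
    ring

theorem denom_mul_sum_pow_mul_eigvec (t : ℝ) (l m : ℕ) :
    denom a (cos t) * ∑ j ∈ range m, a ^ j * eigvec a t (l + j)
      = qFun l a t - a ^ m * qFun (l + m) a t := by
  induction m with
  | zero => simp
  | succ m ih =>
    rw [sum_range_succ, mul_add, ih, ← add_assoc l m 1]
    linear_combination a ^ m * denom_mul_eigvec t (l + m)

theorem kernel_comm (a : ℝ) (l k : ℕ) : kernel a l k = kernel a k l := by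
  by_cases h : l = k
  · rw [h]
  · rw [kernel, kernel, if_neg h, if_neg (Ne.symm h), Nat.dist_comm]

theorem kernel_of_lt {l k : ℕ} (h : k < l) :
    kernel a l k = (1 - a ^ 2) / 2 * a ^ (l - 1 - k) := by
  rw [kernel, if_neg h.ne', Nat.dist_eq_sub_of_le_right h.le, Nat.sub_right_comm]

theorem denom_mul_sum_kernel_mul_eigvec {l : ℕ} (t : ℝ) (hl : l < n) (hq : qFun n a t = 0) :
    denom a (cos t) * ∑ k ∈ range n, kernel a l k * eigvec a t k
      = ((1 - 3 * a ^ 2) * cos t + 2 * a ^ 3) * eigvec a t l := by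
  have hlow : ∑ k ∈ range l, kernel a l k * eigvec a t k = (1 - a ^ 2) / 2 * sin (l * t) := by
    rw [← sum_pow_mul_eigvec, Finset.mul_sum]
    refine Finset.sum_congr rfl fun k hk => ?_
    rw [kernel_of_lt (mem_range.mp hk), mul_assoc]
  have hhigh : denom a (cos t) * ∑ k ∈ Ico (l + 1) n, kernel a l k * eigvec a t k
      = (1 - a ^ 2) / 2 * qFun (l + 1) a t := by
    have htel := denom_mul_sum_pow_mul_eigvec (a := a) t (l + 1) (n - (l + 1))
    rw [Nat.add_sub_cancel' hl, hq, mul_zero, sub_zero] at htel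
    have hsum : ∑ j ∈ range (n - (l + 1)), kernel a l (l + 1 + j) * eigvec a t (l + 1 + j)
        = (1 - a ^ 2) / 2 * ∑ j ∈ range (n - (l + 1)), a ^ j * eigvec a t (l + 1 + j) := by
      rw [Finset.mul_sum]
      refine Finset.sum_congr rfl fun j _ => ?_
      rw [kernel_comm, kernel_of_lt (by omega), mul_assoc]
      congr 3
      omega
    rw [sum_Ico_eq_sum_range, hsum, ← htel]
    ring
  rw [← sum_range_add_sum_Ico (fun k => kernel a l k * eigvec a t k) (Nat.succ_le_of_lt hl),
    sum_range_succ, hlow, mul_add, mul_add, hhigh, kernel, if_pos rfl]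
  have key := denom_mul_sin_add_qFun (a := a) t l
  unfold denom at *
  linear_combination (1 - a ^ 2) / 2 * key

theorem symmAbs_mulVec_eigvec (ha0 : 0 ≤ a) (ha1 : a < 1) {t : ℝ} (hq : qFun n a t = 0) :
    symmAbs n a *ᵥ (fun k : Fin n => eigvec a t k)
      = eigval a (cos t) • fun k : Fin n => eigvec a t k := by
  ext l
  have hd := (denom_pos ha0 ha1 (cos_le_one t)).ne'
  have hrow := denom_mul_sum_kernel_mul_eigvec t l.isLt hq
  rw [← Fin.sum_univ_eq_sum_range (fun k => kernel a l k * eigvec a t k)] at hrow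
  rw [Pi.smul_apply, smul_eq_mul, eigval, div_mul_eq_mul_div, eq_div_iff hd, mul_comm, ← hrow]
  rfl

theorem symmAbs_isHermitian (n : ℕ) (a : ℝ) : (symmAbs n a).IsHermitian :=
  IsHermitian.ext fun l k => kernel_comm a k l

theorem symmAbs_apply_of_lt {l k : Fin n} (h : l < k) :
    symmAbs n a l k = (1 - a ^ 2) / 2 * a ^ ((k : ℕ) - l - 1) := by
  rw [symmAbs, of_apply, kernel_comm, kernel_of_lt h, Nat.sub_right_comm]

theorem symmAbs_apply_comm (a : ℝ) (l k : Fin n) : symmAbs n a l k = symmAbs n a k l :=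
  kernel_comm a l k

theorem eigvec_ne_zero (hn : 0 < n) {t : ℝ} (ht : t ∈ Set.Ioo 0 π) :
    (fun k : Fin n => eigvec a t k) ≠ 0 := by
  intro h
  have := congrFun h ⟨0, hn⟩
  simp only [eigvec, Pi.zero_apply, Nat.cast_zero, zero_add, one_mul, zero_mul, sin_zero,
    mul_zero, sub_zero] at this
  exact (sin_pos_of_pos_of_lt_pi ht.1 ht.2).ne' this

theorem qFun_eq_denom_mul_sin_phase (ha0 : 0 ≤ a) (ha1 : a < 1) (n : ℕ) {t : ℝ}
    (hs : 0 ≤ sin t) : qFun n a t = denom a (cos t) * sin (phase n a t) := by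
  have hd := denom_pos ha0 ha1 (cos_le_one t)
  set r := √(denom a (cos t)) with hr
  have hr0 : 0 < r := sqrt_pos.mpr hd
  have hr2 : r ^ 2 = denom a (cos t) := sq_sqrt hd.le
  have hca : |cos t - a| ≤ r := abs_le_sqrt (by rw [denom_cos_eq]; nlinarith)
  have hu : |(cos t - a) / r| ≤ 1 := by
    rw [abs_div, abs_of_pos hr0]; exact div_le_one_of_le₀ hca hr0.le
  have hcos : cos (arccos ((cos t - a) / r)) = (cos t - a) / r :=
    cos_arccos (abs_le.mp hu).1 (abs_le.mp hu).2
  have hsin : sin (arccos ((cos t - a) / r)) = sin t / r := by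
    have h : 1 - ((cos t - a) / r) ^ 2 = (sin t / r) ^ 2 := by
      field_simp
      rw [hr2, denom_cos_eq]
      ring
    rw [sin_arccos, h, sqrt_sq (div_nonneg hs hr0.le)]
  rw [phase, ← hr, sin_add, sin_two_mul, cos_two_mul, hcos, hsin]
  have e1 : ((n : ℝ) + 1) * t = ((n : ℝ) - 1) * t + (t + t) := by ring
  have e2 : (n : ℝ) * t = ((n : ℝ) - 1) * t + t := by ring
  rw [qFun, e1, e2, ← hr2]
  simp only [sin_add, cos_add]
  field_simp
  rw [hr2, denom_cos_eq]
  ring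

theorem continuous_phase (ha0 : 0 ≤ a) (ha1 : a < 1) (n : ℕ) : Continuous (phase n a) := by
  unfold phase
  refine .add (by fun_prop) (.mul continuous_const (continuous_arccos.comp ?_))
  refine Continuous.div (by fun_prop) (by unfold denom; fun_prop) fun t => ?_
  exact (sqrt_pos.mpr (denom_pos ha0 ha1 (cos_le_one t))).ne'

theorem phase_zero (ha1 : a < 1) (n : ℕ) : phase n a 0 = 0 := by
  have h : denom a (cos 0) = (1 - a) ^ 2 := by rw [cos_zero, denom]; ring
  rw [phase, h, sqrt_sq (by linarith), cos_zero, div_self (by linarith), arccos_one]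
  ring

theorem phase_pi (ha0 : 0 ≤ a) (n : ℕ) : phase n a π = (n + 1) * π := by
  have h : denom a (cos π) = (1 + a) ^ 2 := by rw [cos_pi, denom]; ring
  rw [phase, h, sqrt_sq (by linarith), cos_pi, ← neg_add', neg_div, div_self (by linarith),
    arccos_neg_one]
  ring

theorem exists_zeros_qFun (ha0 : 0 ≤ a) (ha1 : a < 1) (n : ℕ) :
    ∃ z : Fin n → ℝ, (∀ j, z j ∈ Set.Ioo 0 π ∧ qFun n a (z j) = 0) ∧
      Function.Injective (cos ∘ z) := by
  have hphase (j : Fin n) : ∃ t ∈ Set.Ioo 0 π, phase n a t = (j + 1 : ℕ) * π := by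
    refine intermediate_value_Ioo pi_pos.le (continuous_phase ha0 ha1 n).continuousOn ?_
    rw [phase_zero ha1, phase_pi ha0, Set.mem_Ioo]
    have : ((j + 1 : ℕ) : ℝ) ≤ n := by exact_mod_cast j.isLt
    have : (0 : ℝ) < (j + 1 : ℕ) := by positivity
    constructor <;> nlinarith [pi_pos]
  choose z hz hphz using hphase
  refine ⟨z, fun j => ⟨hz j, ?_⟩, fun i j hij => ?_⟩
  · rw [qFun_eq_denom_mul_sin_phase ha0 ha1 n
      (sin_nonneg_of_mem_Icc (Set.Ioo_subset_Icc_self (hz j))), hphz, sin_nat_mul_pi, mul_zero]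
  · have hzij : z i = z j := injOn_cos (Set.Ioo_subset_Icc_self (hz i))
      (Set.Ioo_subset_Icc_self (hz j)) hij
    have : ((i + 1 : ℕ) : ℝ) * π = ((j + 1 : ℕ) : ℝ) * π := by rw [← hphz, ← hphz, hzij]
    have := mul_right_cancel₀ pi_pos.ne' this
    exact Fin.ext (by exact_mod_cast Nat.succ_injective (by exact_mod_cast this))

theorem dotProduct_symmAbs_mulVec_le (ha0 : 0 ≤ a) (ha1 : a < 1) {t₁ : ℝ} (h0 : 0 ≤ t₁)
    (ht₁ : t₁ ∈ lowerBounds {t | t ∈ Set.Ioo 0 π ∧ qFun n a t = 0}) (y : Fin n → ℝ) :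
    y ⬝ᵥ (symmAbs n a *ᵥ y) ≤ eigval a (cos t₁) * (y ⬝ᵥ y) := by
  obtain ⟨z, hz, hinj⟩ := exists_zeros_qFun ha0 ha1 n
  have hmono := eigval_strictMonoOn ha0 ha1
  refine (symmAbs_isHermitian n a).dotProduct_mulVec_le (μ := fun j => eigval a (cos (z j)))
    (fun i j hij => hinj (hmono.injOn (cos_le_one _) (cos_le_one _) hij))
    (fun j => eigvec_ne_zero (a := a) j.pos (hz j).1)
    (fun j => symmAbs_mulVec_eigvec ha0 ha1 (hz j).2)
    (fun j => hmono.monotoneOn (cos_le_one _) (cos_le_one _) ?_) y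
  exact cos_le_cos_of_nonneg_of_le_pi h0 (hz j).1.2.le (ht₁ (hz j))

theorem apply_eq {α ζ : ℂ} (hζ : ‖ζ‖ = 1) (hαζ : -α = ‖α‖ * ζ) (l k : Fin n) :
    Tmat n α l k = conj ζ ^ ((l : ℕ) + 1) * ζ ^ (k : ℕ) * realModel n ‖α‖ l k := by
  have hζζ (j : ℕ) : conj ζ ^ j * ζ ^ j = 1 := by
    rw [← mul_pow, Complex.conj_mul', hζ]; norm_num
  rcases lt_trichotomy l k with h | rfl | h
  · obtain ⟨m, hm⟩ : ∃ m, (k : ℕ) = l + m + 1 := ⟨k - l - 1, by omega⟩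
    simp only [Tmat, realModel, of_apply, if_neg h.ne, if_pos h, hm, hαζ]
    rw [show (l : ℕ) + m + 1 - l - 1 = m by omega]
    push_cast
    linear_combination ((‖α‖ : ℂ) ^ 2 - 1) * (‖α‖ : ℂ) ^ m * ζ ^ m * hζζ ((l : ℕ) + 1)
  · have hα : conj α = -(‖α‖ * conj ζ) := by
      simpa using congrArg conj (neg_eq_iff_eq_neg.mp hαζ)
    simp only [Tmat, realModel, of_apply, hα]
    push_cast
    linear_combination (‖α‖ : ℂ) * conj ζ * hζζ l
  · simp [Tmat, realModel, h.ne', not_lt_of_gt h]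

theorem norm_apply (α : ℂ) (l k : Fin n) : ‖Tmat n α l k‖ = |realModel n ‖α‖ l k| := by
  obtain ⟨ζ, hζ, hαζ⟩ := Complex.exists_norm_eq_one_neg_eq α
  rw [apply_eq hζ hαζ, norm_mul, norm_mul, norm_pow, norm_pow, Complex.norm_conj, hζ,
    one_pow, one_pow, one_mul, one_mul, Complex.norm_real, Real.norm_eq_abs]

theorem realModel_add_transpose (a : ℝ) :
    realModel n a + (realModel n a)ᵀ = (2 : ℝ) • (symmAbs n a - (2 * a) • 1) := by
  ext l k
  rcases lt_trichotomy l k with h | rfl | h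
  · simp [realModel, symmAbs_apply_of_lt h, h.ne, h.ne', h, not_lt_of_gt h]
    ring
  · simp [realModel, symmAbs, kernel]; ring
  · simp [realModel, symmAbs_apply_comm a l, symmAbs_apply_of_lt h, h.ne, h.ne', h,
      not_lt_of_gt h]
    ring

theorem abs_realModel_add_transpose (ha0 : 0 ≤ a) (ha1 : a ≤ 1) :
    (realModel n a).map abs + ((realModel n a).map abs)ᵀ = (2 : ℝ) • symmAbs n a := by
  have h1 : |1 - a ^ 2| = 1 - a ^ 2 := abs_of_nonneg (by nlinarith)
  ext l k
  rcases lt_trichotomy l k with h | rfl | h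
  · simp [realModel, symmAbs_apply_of_lt h, h.ne, h.ne', h, not_lt_of_gt h, h1,
      abs_of_nonneg ha0]
    ring
  · simp [realModel, symmAbs, kernel, abs_of_nonneg ha0]; ring
  · simp [realModel, symmAbs_apply_comm a l, symmAbs_apply_of_lt h, h.ne, h.ne', h,
      not_lt_of_gt h, h1, abs_of_nonneg ha0]
    ring

theorem inner_toLp_conj_pow_mul {α ζ : ℂ} (hζ : ‖ζ‖ = 1) (hαζ : -α = ‖α‖ * ζ)
    (w : Fin n → ℝ) :
    inner ℂ (WithLp.toLp 2 fun k : Fin n => conj ζ ^ (k : ℕ) * w k)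
        (toEuclideanLin (Tmat n α) (WithLp.toLp 2 fun k : Fin n => conj ζ ^ (k : ℕ) * w k))
      = conj ζ * (w ⬝ᵥ (realModel n ‖α‖ *ᵥ w) : ℝ) := by
  have hζζ (j : ℕ) : conj ζ ^ j * ζ ^ j = 1 := by
    rw [← mul_pow, Complex.conj_mul', hζ]; norm_num
  simp only [toLpLin_apply, EuclideanSpace.inner_eq_star_dotProduct, dotProduct, mulVec,
    apply_eq hζ hαζ]
  push_cast
  rw [Finset.mul_sum]
  refine Finset.sum_congr rfl fun l _ => ?_
  rw [Finset.sum_mul, Finset.mul_sum, Finset.mul_sum]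
  refine Finset.sum_congr rfl fun k _ => ?_
  simp only [Pi.star_apply, star_mul', RCLike.star_def, map_pow, Complex.conj_conj,
    Complex.conj_ofReal]
  linear_combination (realModel n ‖α‖ l k * w k * w l : ℂ) * conj ζ *
    ((conj ζ ^ (l : ℕ) * ζ ^ (l : ℕ)) * hζζ k + hζζ l)

theorem norm_inner_le {α : ℂ} (hα : ‖α‖ < 1) {t₁ : ℝ} (h0 : 0 ≤ t₁)
    (ht₁ : t₁ ∈ lowerBounds {t | t ∈ Set.Ioo 0 π ∧ qFun n ‖α‖ t = 0})
    (x : EuclideanSpace ℂ (Fin n)) (hx : ‖x‖ = 1) :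
    ‖inner ℂ x (toEuclideanLin (Tmat n α) x)‖ ≤ eigval ‖α‖ (cos t₁) := by
  set y : Fin n → ℝ := fun i => ‖x i‖
  have hy : y ⬝ᵥ y = 1 := by
    rw [← one_pow 2, ← hx, EuclideanSpace.norm_sq_eq]
    simp [y, dotProduct, sq]
  have hmap : (Tmat n α).map norm = (realModel n ‖α‖).map abs := by
    ext l k; exact norm_apply α l k
  have hsymm : y ⬝ᵥ ((Tmat n α).map norm *ᵥ y) = y ⬝ᵥ (symmAbs n ‖α‖ *ᵥ y) := by
    have := dotProduct_add_transpose_mulVec ((realModel n ‖α‖).map abs) y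
    rw [abs_realModel_add_transpose (norm_nonneg α) hα.le, smul_mulVec, dotProduct_smul,
      smul_eq_mul] at this
    rw [hmap]
    linarith
  calc ‖inner ℂ x (toEuclideanLin (Tmat n α) x)‖
      ≤ y ⬝ᵥ ((Tmat n α).map norm *ᵥ y) := norm_inner_toEuclideanLin_le _ x
    _ = y ⬝ᵥ (symmAbs n ‖α‖ *ᵥ y) := hsymm
    _ ≤ eigval ‖α‖ (cos t₁) * (y ⬝ᵥ y) :=
        dotProduct_symmAbs_mulVec_le (norm_nonneg α) hα h0 ht₁ y
    _ = eigval ‖α‖ (cos t₁) := by rw [hy, mul_one]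

theorem exists_norm_inner_eq (hn : 0 < n) {α : ℂ} (hα : ‖α‖ < 1) {t : ℝ}
    (ht : t ∈ Set.Ioo 0 π) (hq : qFun n ‖α‖ t = 0) :
    ∃ x : EuclideanSpace ℂ (Fin n), ‖x‖ = 1 ∧
      ‖inner ℂ x (toEuclideanLin (Tmat n α) x)‖ = |eigval ‖α‖ (cos t) - 2 * ‖α‖| := by
  obtain ⟨ζ, hζ, hαζ⟩ := Complex.exists_norm_eq_one_neg_eq α
  obtain ⟨w, hw, hFw⟩ : ∃ w : Fin n → ℝ,
      w ⬝ᵥ w = 1 ∧ symmAbs n ‖α‖ *ᵥ w = eigval ‖α‖ (cos t) • w := by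
    set v : Fin n → ℝ := fun k => eigvec ‖α‖ t k
    have hv : 0 < v ⬝ᵥ v := lt_of_le_of_ne (dotProduct_self_star_nonneg v)
      (Ne.symm (dotProduct_self_eq_zero.not.mpr (eigvec_ne_zero hn ht)))
    refine ⟨(√(v ⬝ᵥ v))⁻¹ • v, ?_, ?_⟩
    · rw [smul_dotProduct, dotProduct_smul, smul_eq_mul, smul_eq_mul, ← mul_assoc, ← mul_inv,
        mul_self_sqrt hv.le, inv_mul_cancel₀ hv.ne']
    · rw [mulVec_smul, symmAbs_mulVec_eigvec (norm_nonneg α) hα hq, smul_comm]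
  have hRw : w ⬝ᵥ (realModel n ‖α‖ *ᵥ w) = eigval ‖α‖ (cos t) - 2 * ‖α‖ := by
    have := dotProduct_add_transpose_mulVec (realModel n ‖α‖) w
    rw [realModel_add_transpose, smul_mulVec, sub_mulVec, hFw, smul_mulVec, one_mulVec,
      dotProduct_smul, dotProduct_sub, dotProduct_smul, dotProduct_smul, hw] at this
    simp only [smul_eq_mul] at this
    linarith
  refine ⟨WithLp.toLp 2 fun k => conj ζ ^ (k : ℕ) * w k, ?_, ?_⟩
  · rw [EuclideanSpace.norm_eq, sqrt_eq_one, ← hw]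
    simp [dotProduct, hζ, sq]
  · rw [inner_toLp_conj_pow_mul hζ hαζ, hRw, norm_mul, Complex.norm_conj, hζ, one_mul,
      Complex.norm_real, Real.norm_eq_abs]

end Tmat

open Tmat in
/-- For `n ≥ 2`, `α ∈ ℂ` with `|α| < 1` and `a = |α|`, with `t₁` and `tₙ` the
smallest and largest zeros in `(0, π)` of
`q_{n,a}(t) = sin((n+1)t) − 2a sin(nt) + a² sin((n−1)t)`, the numerical radius of
`T_n(α)` satisfies `m_n(a) ≤ w(T_n(α)) ≤ M_n(a)`, where
`m_n(a) = max { |(1+a²)cos t₁ − 2a|/(1 − 2a cos t₁ + a²),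
                (−(1+a²)cos tₙ + 2a)/(1 − 2a cos tₙ + a²) }` and
`M_n(a) = max { ((1−3a²)cos t₁ + 2a³)/(1 − 2a cos t₁ + a²),
                (−(1+a²)cos tₙ + 2a)/(1 − 2a cos tₙ + a²) }`. -/
theorem numRadius_Tmat_bounds (n : ℕ) (hn : 2 ≤ n) (α : ℂ) (hα : ‖α‖ < 1)
    (t₁ tn : ℝ)
    (ht₁ : IsLeast {t : ℝ | t ∈ Set.Ioo 0 Real.pi ∧
      Real.sin (((n : ℝ) + 1) * t) - 2 * ‖α‖ * Real.sin ((n : ℝ) * t)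
        + ‖α‖ ^ 2 * Real.sin (((n : ℝ) - 1) * t) = 0} t₁)
    (htn : IsGreatest {t : ℝ | t ∈ Set.Ioo 0 Real.pi ∧
      Real.sin (((n : ℝ) + 1) * t) - 2 * ‖α‖ * Real.sin ((n : ℝ) * t)
        + ‖α‖ ^ 2 * Real.sin (((n : ℝ) - 1) * t) = 0} tn) :
    max (|(1 + ‖α‖ ^ 2) * Real.cos t₁ - 2 * ‖α‖|
          / (1 - 2 * ‖α‖ * Real.cos t₁ + ‖α‖ ^ 2))
        ((-((1 + ‖α‖ ^ 2) * Real.cos tn) + 2 * ‖α‖)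
          / (1 - 2 * ‖α‖ * Real.cos tn + ‖α‖ ^ 2))
      ≤ numRadius (Tmat n α) ∧
    numRadius (Tmat n α)
      ≤ max (((1 - 3 * ‖α‖ ^ 2) * Real.cos t₁ + 2 * ‖α‖ ^ 3)
            / (1 - 2 * ‖α‖ * Real.cos t₁ + ‖α‖ ^ 2))
          ((-((1 + ‖α‖ ^ 2) * Real.cos tn) + 2 * ‖α‖)
            / (1 - 2 * ‖α‖ * Real.cos tn + ‖α‖ ^ 2)) := by
  have ha0 := norm_nonneg α
  have hupper := norm_inner_le (n := n) hα ht₁.1.1.1.le ht₁.2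
  obtain ⟨x₁, hx₁, h₁⟩ := exists_norm_inner_eq (by omega) hα ht₁.1.1 ht₁.1.2
  obtain ⟨xn, hxn, hn'⟩ := exists_norm_inner_eq (by omega) hα htn.1.1 htn.1.2
  refine ⟨max_le ?_ ?_, (numRadius_le_s16 hupper ⟨x₁, hx₁⟩).trans (le_max_left _ _)⟩
  · calc |(1 + ‖α‖ ^ 2) * cos t₁ - 2 * ‖α‖| / (1 - 2 * ‖α‖ * cos t₁ + ‖α‖ ^ 2)
        = |eigval ‖α‖ (cos t₁) - 2 * ‖α‖| := by
          rw [eigval_sub_two_mul ha0 hα (cos_le_one _), abs_div,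
            abs_of_pos (denom_pos ha0 hα (cos_le_one _)), denom]
      _ ≤ numRadius (Tmat n α) := h₁ ▸ le_numRadius hupper hx₁
  · calc (-((1 + ‖α‖ ^ 2) * cos tn) + 2 * ‖α‖) / (1 - 2 * ‖α‖ * cos tn + ‖α‖ ^ 2)
        = -(eigval ‖α‖ (cos tn) - 2 * ‖α‖) := by
          rw [eigval_sub_two_mul ha0 hα (cos_le_one _), denom]
          ring
      _ ≤ |eigval ‖α‖ (cos tn) - 2 * ‖α‖| := neg_le_abs _
      _ ≤ numRadius (Tmat n α) := hn' ▸ le_numRadius hupper hxn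
end

section
/- For every integer n ≥ 2, the numerical radius of the n×n nilpotent Jordan block S_n (the matrix with 1 in each entry of the subdiagonal and 0 elsewhere) equals cos(π/(n+1)). -/
open Finset Real

theorem numRadius_eq_of_forall_le_of_eq {n : ℕ} {A : Matrix (Fin n) (Fin n) ℂ} {c : ℝ}
    (hle : ∀ x : EuclideanSpace ℂ (Fin n), ‖inner ℂ x (Matrix.toEuclideanLin A x)‖ ≤ c * ‖x‖ ^ 2)
    {v : EuclideanSpace ℂ (Fin n)} (hv : v ≠ 0)
    (heq : ‖inner ℂ v (Matrix.toEuclideanLin A v)‖ = c * ‖v‖ ^ 2) :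
    numRadius A = c := by
  have hmem : c ∈ { r : ℝ | ∃ x : EuclideanSpace ℂ (Fin n), ‖x‖ = 1 ∧
      r = ‖(inner ℂ x (Matrix.toEuclideanLin A x) : ℂ)‖ } := by
    have hv' : ‖v‖ ≠ 0 := norm_ne_zero_iff.mpr hv
    refine ⟨((‖v‖⁻¹ : ℝ) : ℂ) • v, ?_, ?_⟩
    · rw [norm_smul, Complex.norm_real, Real.norm_eq_abs, abs_inv, abs_norm, inv_mul_cancel₀ hv']
    · rw [map_smul, inner_smul_left, inner_smul_right, norm_mul, norm_mul, heq, Complex.conj_ofReal,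
        Complex.norm_real, Real.norm_eq_abs, abs_inv, abs_norm]
      field_simp
  refine le_antisymm (csSup_le ⟨c, hmem⟩ ?_) (le_csSup ⟨c, ?_⟩ hmem) <;>
  · rintro r ⟨x, hx, rfl⟩
    simpa [hx] using hle x

section Weights

variable {n : ℕ} {c : ℝ} {w : ℕ → ℝ}

theorem sum_mul_succ_le_add_of_weight (hw0 : w 0 = 0) (hpos : ∀ k, 1 ≤ k → k ≤ n → 0 < w k)
    (hrec : ∀ k, w k + w (k + 2) = 2 * c * w (k + 1)) (a : ℕ → ℝ) {m : ℕ} (hm : m + 1 ≤ n) :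
    ∑ k ∈ range m, a k * a (k + 1) ≤
      c * ∑ k ∈ range m, a k ^ 2 + w m / (2 * w (m + 1)) * a m ^ 2 := by
  induction m with
  | zero => simp [hw0]
  | succ m ih =>
    have hw1 : 0 < w (m + 1) := hpos _ (by omega) (by omega)
    have hw2 : 0 < w (m + 2) := hpos _ (by omega) (by omega)
    have hstep : a m * a (m + 1) + w m / (2 * w (m + 1)) * a m ^ 2 +
        (w (m + 2) * a m - w (m + 1) * a (m + 1)) ^ 2 / (2 * w (m + 1) * w (m + 2)) =
        c * a m ^ 2 + w (m + 1) / (2 * w (m + 2)) * a (m + 1) ^ 2 := by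
      field_simp
      linear_combination (w (m + 2) * a m ^ 2) * hrec m
    have hsq : 0 ≤ (w (m + 2) * a m - w (m + 1) * a (m + 1)) ^ 2 / (2 * w (m + 1) * w (m + 2)) := by
      positivity
    rw [sum_range_succ, sum_range_succ]
    linarith [ih (by omega)]

theorem sum_mul_succ_le_of_weight (hw0 : w 0 = 0) (hwn : w (n + 1) = 0)
    (hpos : ∀ k, 1 ≤ k → k ≤ n → 0 < w k) (hrec : ∀ k, w k + w (k + 2) = 2 * c * w (k + 1))
    (a : ℕ → ℝ) (ha : a n = 0) :
    ∑ k ∈ range n, a k * a (k + 1) ≤ c * ∑ k ∈ range n, a k ^ 2 := by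
  cases n with
  | zero => simp
  | succ m =>
    have hw : 0 < w (m + 1) := hpos _ (by omega) le_rfl
    have hc : w m / (2 * w (m + 1)) = c := by
      have := hrec m
      rw [hwn] at this
      field_simp
      linarith
    have hpartial := sum_mul_succ_le_add_of_weight hw0 hpos hrec a le_rfl
    rw [hc] at hpartial
    rw [sum_range_succ, sum_range_succ, ha, mul_zero, add_zero]
    linarith

theorem sum_weight_mul_succ_eq (hw0 : w 0 = 0) (hwn : w (n + 1) = 0)
    (hrec : ∀ k, w k + w (k + 2) = 2 * c * w (k + 1)) :
    ∑ k ∈ range n, w (k + 1) * w (k + 2) = c * ∑ k ∈ range n, w (k + 1) ^ 2 := by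
  have key : ∀ m, ∑ k ∈ range m, w (k + 1) * w (k + 2) =
      c * ∑ k ∈ range m, w (k + 1) ^ 2 + w m * w (m + 1) / 2 := by
    intro m
    induction m with
    | zero => simp [hw0]
    | succ m ih =>
      rw [sum_range_succ, sum_range_succ, ih]
      linear_combination (w (m + 1) / 2) * hrec m
  simpa [hwn] using key n

end Weights

noncomputable def sinWeight (n k : ℕ) : ℝ := sin (k * (π / (n + 1)))

section SinWeight
variable {n : ℕ}

theorem sinWeight_zero : sinWeight n 0 = 0 := by simp [sinWeight]

theorem sinWeight_self_add_one : sinWeight n (n + 1) = 0 := by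
  rw [sinWeight, Nat.cast_add_one, mul_div_cancel₀ _ (by positivity), sin_pi]

theorem sinWeight_pos {k : ℕ} (hk : 1 ≤ k) (hkn : k ≤ n) : 0 < sinWeight n k := by
  have hk' : (0 : ℝ) < k := by exact_mod_cast hk
  have hkn' : (k : ℝ) < n + 1 := by exact_mod_cast Nat.lt_succ_of_le hkn
  apply sin_pos_of_pos_of_lt_pi (by positivity)
  rw [mul_div_assoc', div_lt_iff₀ (by positivity), mul_comm]
  exact mul_lt_mul_of_pos_left hkn' pi_pos

theorem sinWeight_add_sinWeight (k : ℕ) :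
    sinWeight n k + sinWeight n (k + 2) = 2 * cos (π / (n + 1)) * sinWeight n (k + 1) := by
  simp only [sinWeight, sin_add_sin]
  push_cast
  rw [← cos_neg]
  ring_nf

theorem cos_pi_div_add_one_nonneg (hn : n ≠ 0) : 0 ≤ cos (π / (n + 1)) := by
  refine cos_nonneg_of_mem_Icc ⟨by linarith [pi_pos, show 0 < π / (n + 1) by positivity], ?_⟩
  have : (2 : ℝ) ≤ n + 1 := by norm_cast; omega
  exact div_le_div_of_nonneg_left pi_pos.le two_pos this

end SinWeight

def lowerShift (n : ℕ) : Matrix (Fin n) (Fin n) ℂ :=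
  Matrix.of fun r s : Fin n => if (r : ℕ) = (s : ℕ) + 1 then (1 : ℂ) else 0

def zeroExtend {α : Type*} [Zero α] {n : ℕ} (x : Fin n → α) (k : ℕ) : α :=
  if h : k < n then x ⟨k, h⟩ else 0

section ZeroExtend
variable {α : Type*} [Zero α] {n : ℕ} (x : Fin n → α)

@[simp] theorem zeroExtend_val (i : Fin n) : zeroExtend x i = x i := by
  simp [zeroExtend]

theorem zeroExtend_of_le {k : ℕ} (hk : n ≤ k) : zeroExtend x k = 0 := by
  simp [zeroExtend, Nat.not_lt.mpr hk]

theorem sum_range_zeroExtend {M : Type*} [AddCommMonoid M] (f : α → M) :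
    ∑ k ∈ range n, f (zeroExtend x k) = ∑ i, f (x i) := by
  simp [← Fin.sum_univ_eq_sum_range]

end ZeroExtend

theorem sum_sum_ite_eq_succ {M : Type*} [AddCommMonoid M] (n : ℕ) (g : ℕ → ℕ → M)
    (hg : ∀ k, g n k = 0) :
    ∑ r : Fin n, ∑ s : Fin n, (if (r : ℕ) = s + 1 then g r s else 0) =
      ∑ k ∈ range n, g (k + 1) k := by
  have hinner (r : ℕ) : ∑ s : Fin n, (if r = s + 1 then g r s else 0) =
      ∑ s ∈ range n, if r = s + 1 then g r s else 0 :=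
    Fin.sum_univ_eq_sum_range (fun s => if r = s + 1 then g r s else 0) n
  simp only [hinner]
  rw [Fin.sum_univ_eq_sum_range (fun r => ∑ s ∈ range n, if r = s + 1 then g r s else 0), sum_comm]
  refine sum_congr rfl fun k hk => ?_
  rw [sum_ite_eq']
  split_ifs with h
  · rfl
  · rw [show k + 1 = n by simp at hk h; omega, hg]

theorem inner_lowerShift {n : ℕ} (x : EuclideanSpace ℂ (Fin n)) :
    inner ℂ x (Matrix.toEuclideanLin (lowerShift n) x) =
      ∑ k ∈ range n, starRingEnd ℂ (zeroExtend x.ofLp (k + 1)) * zeroExtend x.ofLp k := by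
  rw [← sum_sum_ite_eq_succ n (fun r s => starRingEnd ℂ (zeroExtend x.ofLp r) * zeroExtend x.ofLp s)
    fun k => by rw [zeroExtend_of_le _ le_rfl, map_zero, zero_mul]]
  simp [Matrix.toLpLin_apply, PiLp.inner_apply, Matrix.mulVec, dotProduct, lowerShift,
    mul_sum, mul_comm]

theorem norm_inner_lowerShift_le {n : ℕ} (x : EuclideanSpace ℂ (Fin n)) :
    ‖inner ℂ x (Matrix.toEuclideanLin (lowerShift n) x)‖ ≤ cos (π / (n + 1)) * ‖x‖ ^ 2 := by
  set a : ℕ → ℝ := fun k => ‖zeroExtend x.ofLp k‖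
  have hbound := sum_mul_succ_le_of_weight (n := n) sinWeight_zero sinWeight_self_add_one
    (fun _ => sinWeight_pos) sinWeight_add_sinWeight a
    (by simp only [a, zeroExtend_of_le _ le_rfl, norm_zero])
  rw [inner_lowerShift, EuclideanSpace.norm_sq_eq, ← sum_range_zeroExtend x.ofLp (‖·‖ ^ 2)]
  calc _ ≤ ∑ k ∈ range n, ‖starRingEnd ℂ (zeroExtend x.ofLp (k + 1)) * zeroExtend x.ofLp k‖ :=
        norm_sum_le _ _
    _ = ∑ k ∈ range n, a k * a (k + 1) := by
        simp only [norm_mul, RCLike.norm_conj, mul_comm, a]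
    _ ≤ _ := hbound

noncomputable def sinVector (n : ℕ) : EuclideanSpace ℂ (Fin n) :=
  WithLp.toLp 2 fun i => (sinWeight n (i + 1) : ℂ)

theorem zeroExtend_sinVector {n k : ℕ} (hk : k ≤ n) :
    zeroExtend (sinVector n).ofLp k = (sinWeight n (k + 1) : ℂ) := by
  rcases hk.lt_or_eq with hk | rfl
  · simp [zeroExtend, hk, sinVector]
  · simp [zeroExtend_of_le, sinWeight_self_add_one]

theorem norm_sinVector_sq (n : ℕ) : ‖sinVector n‖ ^ 2 = ∑ k ∈ range n, sinWeight n (k + 1) ^ 2 := by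
  simp [EuclideanSpace.norm_sq_eq, sinVector,
    ← Fin.sum_univ_eq_sum_range (fun k => sinWeight n (k + 1) ^ 2)]

theorem sinVector_ne_zero {n : ℕ} (hn : n ≠ 0) : sinVector n ≠ 0 := by
  intro h
  have h0 := congr_arg (fun v : EuclideanSpace ℂ (Fin n) => v.ofLp ⟨0, Nat.pos_of_ne_zero hn⟩) h
  simp [sinVector] at h0
  exact (sinWeight_pos le_rfl (Nat.one_le_iff_ne_zero.mpr hn)).ne' h0

theorem inner_lowerShift_sinVector (n : ℕ) :
    inner ℂ (sinVector n) (Matrix.toEuclideanLin (lowerShift n) (sinVector n)) =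
      ((cos (π / (n + 1)) * ‖sinVector n‖ ^ 2 : ℝ) : ℂ) := by
  rw [inner_lowerShift, norm_sinVector_sq, ← sum_weight_mul_succ_eq sinWeight_zero
    sinWeight_self_add_one sinWeight_add_sinWeight, Complex.ofReal_sum]
  refine sum_congr rfl fun k hk => ?_
  have hk := mem_range.mp hk
  rw [zeroExtend_sinVector hk, zeroExtend_sinVector hk.le, Complex.conj_ofReal]
  push_cast
  ring

/-- For every `n ≥ 2`, the numerical radius of the `n × n` nilpotent Jordan
block `S_n` (with `(r,s)` entry `1` if `r = s+1` and `0` otherwise) equals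
`cos (π/(n+1))`. -/
theorem numRadius_jordan_block (n : ℕ) (hn : 2 ≤ n) :
    numRadius (Matrix.of fun r s : Fin n =>
        if (r : ℕ) = (s : ℕ) + 1 then (1 : ℂ) else 0)
      = Real.cos (Real.pi / ((n : ℝ) + 1)) := by
  refine numRadius_eq_of_forall_le_of_eq (A := lowerShift n) norm_inner_lowerShift_le
    (sinVector_ne_zero (by omega)) ?_
  rw [inner_lowerShift_sinVector, Complex.norm_real, Real.norm_of_nonneg]
  exact mul_nonneg (cos_pi_div_add_one_nonneg (by omega)) (sq_nonneg _)
end
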